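/- arXiv:1801.06961 — 5 statements merged into one kernel-verified Lean document; each statement's English description precedes it below -/
import Mathlib

section
/- (Bellaïche–Chenevier) Let (A, m, k) be a complete local domain with char(k) ≠ 2 and ρ : G → GL_2(Frac(A)) a representation of a group G with tr ρ(G) ⊂ A and tr ρ mod m = ψ_1 + ψ_2 for distinct characters ψ_1, ψ_2 : G → k^×. Choose g_0 ∈ G with ψ_1(g_0) ≠ ψ_2(g_0), let λ_1, λ_2 ∈ A be the roots of the characteristic polynomial of ρ(g_0) (which exist by Hensel's lemma), and choose a basis diagonalizing ρ(g_0). Write ρ(g) = (a(g), b(g); c(g), d(g)). Let I ⊊ A be an ideal such that tr ρ mod I = ϑ_1 + ϑ_2 for characters ϑ_1, ϑ_2 : G → (A/I)^× with ϑ_i lifting ψ_i. Then for all g, g' ∈ G: a(g), d(g) ∈ A, a(g) ≡ ϑ_1(g) mod I, d(g) ≡ ϑ_2(g) mod I, and b(g)c(g') ∈ I. -/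
/-! Because `ρ g₀ = diag(λ₁, λ₂)` with `λ₁ - λ₂` a unit of `A`, the entries of `ρ` are
recovered from traces: `(λ₁ - λ₂) a(g) = tr ρ(g₀ g) - λ₂ tr ρ(g)`, `d(g) = tr ρ(g) - a(g)` and
`b(g) c(g') = a(g g') - a(g) a(g')`. These formulas live in `A` and commute with reduction
modulo `I`. Modulo `I` the trace is `ϑ₁ + ϑ₂` and `λᵢ ≡ ϑᵢ(g₀)`: the two pairs have the same
first and second power sums, `2` is invertible, and `λ₁ ≢ ϑ₂(g₀)` modulo `m`. Applied to
the characters, the same formulas give `a ≡ ϑ₁`, `d ≡ ϑ₂` and `a(g g') - a(g) a(g') ≡ 0`. -/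

open IsLocalRing

section DiagCoeff

variable {G R S : Type*} [Mul G] [CommRing R] [CommRing S]

noncomputable def diagCoeff (t : G → R) (g₀ : G) (l₁ l₂ : R) (g : G) : R :=
  Ring.inverse (l₁ - l₂) * (t (g₀ * g) - l₂ * t g)

variable {t : G → R} {g₀ : G} {l₁ l₂ : R}

theorem diagCoeff_eq_iff (hu : IsUnit (l₁ - l₂)) (g : G) (x : R) :
    diagCoeff t g₀ l₁ l₂ g = x ↔ t (g₀ * g) - l₂ * t g = (l₁ - l₂) * x :=
  Ring.inverse_mul_eq_iff_eq_mul _ _ _ hu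

theorem map_diagCoeff (φ : R →+* S) (hu : IsUnit (l₁ - l₂)) (g : G) :
    φ (diagCoeff t g₀ l₁ l₂ g) = diagCoeff (φ ∘ t) g₀ (φ l₁) (φ l₂) g := by
  have hu' : IsUnit (φ l₁ - φ l₂) := by simpa using hu.map φ
  rw [eq_comm, diagCoeff_eq_iff hu', ← map_sub, ← map_mul,
    ← (diagCoeff_eq_iff hu g _).1 rfl]
  simp

end DiagCoeff

theorem diagCoeff_trace {G R : Type*} [Monoid G] [CommRing R]
    (ρ : G →* Matrix (Fin 2) (Fin 2) R) {g₀ : G} {l₁ l₂ : R} (hu : IsUnit (l₁ - l₂))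
    (h₀ : ρ g₀ = Matrix.diagonal ![l₁, l₂]) (g : G) :
    diagCoeff (fun g ↦ (ρ g).trace) g₀ l₁ l₂ g = ρ g 0 0 := by
  rw [diagCoeff_eq_iff hu, map_mul, h₀, Matrix.trace_fin_two, Matrix.trace_fin_two]
  simp only [Matrix.diagonal_mul, Matrix.cons_val_zero, Matrix.cons_val_one]
  ring

theorem diagCoeff_add_char {G R : Type*} [Monoid G] [CommRing R] (χ₁ χ₂ : G →* Rˣ) {g₀ : G}
    (hu : IsUnit ((χ₁ g₀ : R) - χ₂ g₀)) (g : G) :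
    diagCoeff (fun g ↦ (χ₁ g + χ₂ g : R)) g₀ (χ₁ g₀) (χ₂ g₀) g = χ₁ g := by
  rw [diagCoeff_eq_iff hu]
  simp only [map_mul, Units.val_mul]
  ring

theorem eq_and_eq_of_add_eq_of_sq_add_sq_eq {R : Type*} [CommRing R] (h2 : IsUnit (2 : R))
    {s₁ s₂ t₁ t₂ : R} (hsum : s₁ + s₂ = t₁ + t₂) (hsq : s₁ ^ 2 + s₂ ^ 2 = t₁ ^ 2 + t₂ ^ 2)
    (hu : IsUnit (s₁ - t₂)) : s₁ = t₁ ∧ s₂ = t₂ := by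
  have hprod : s₁ * s₂ = t₁ * t₂ :=
    h2.mul_left_cancel (by linear_combination (s₁ + s₂ + t₁ + t₂) * hsum - hsq)
  have hs₁ : s₁ = t₁ := by
    refine (sub_eq_zero.1 ((hu.mul_left_eq_zero).1 ?_)).symm
    linear_combination hprod - s₁ * hsum
  exact ⟨hs₁, by linear_combination hsum - hs₁⟩

theorem IsLocalRing.isUnit_of_factor_ne_zero {A : Type*} [CommRing A] [IsLocalRing A]
    {I : Ideal A} (hI : I ≤ maximalIdeal A) {x : A ⧸ I}
    (hx : Ideal.Quotient.factor hI x ≠ 0) : IsUnit x := by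
  obtain ⟨y, rfl⟩ := Ideal.Quotient.mk_surjective x
  exact ((residue_ne_zero_iff_isUnit y).1 hx).map _

theorem IsLocalRing.isUnit_two {A : Type*} [CommRing A] [IsLocalRing A]
    (hchar : ringChar (ResidueField A) ≠ 2) : IsUnit (2 : A) :=
  (residue_ne_zero_iff_isUnit 2).1 (by rw [map_ofNat]; exact Ring.two_ne_zero hchar)

theorem IsLocalRing.mk_eq_and_mk_eq_of_add_eq_of_sq_add_sq_eq {A : Type*} [CommRing A]
    [IsLocalRing A] (hchar : ringChar (ResidueField A) ≠ 2) {I : Ideal A}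
    (hI : I ≤ maximalIdeal A) {l₁ l₂ : A} {t₁ t₂ : A ⧸ I}
    (hsum : Ideal.Quotient.mk I (l₁ + l₂) = t₁ + t₂)
    (hsq : Ideal.Quotient.mk I (l₁ ^ 2 + l₂ ^ 2) = t₁ ^ 2 + t₂ ^ 2)
    (hne : residue A l₁ ≠ Ideal.Quotient.factor hI t₂) :
    Ideal.Quotient.mk I l₁ = t₁ ∧ Ideal.Quotient.mk I l₂ = t₂ := by
  refine eq_and_eq_of_add_eq_of_sq_add_sq_eq
    (by simpa only [map_ofNat] using (isUnit_two hchar).map (Ideal.Quotient.mk I))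
    (by rwa [← map_add]) (by rwa [← map_pow, ← map_pow, ← map_add])
    (isUnit_of_factor_ne_zero hI ?_)
  rw [map_sub, Ideal.Quotient.factor_mk, ← residue_def]
  exact sub_ne_zero.2 hne

theorem bellaiche_chenevier_lemma_general
    (A : Type*) [CommRing A] [IsLocalRing A]
    (hchar : ringChar (ResidueField A) ≠ 2)
    (K : Type*) [Field K] [Algebra A K] [IsFractionRing A K]
    (G : Type*) [Group G]
    (ρ : G →* GL (Fin 2) K)
    (tA : G → A)
    (htr : ∀ g : G, algebraMap A K (tA g) = Matrix.trace (ρ g : Matrix (Fin 2) (Fin 2) K))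
    (ψ₁ ψ₂ : G →* (ResidueField A)ˣ)
    (g₀ : G) (hg₀ : ψ₁ g₀ ≠ ψ₂ g₀)
    (lam₁ lam₂ : A)
    (hlam₁ : residue A lam₁ = ↑(ψ₁ g₀)) (hlam₂ : residue A lam₂ = ↑(ψ₂ g₀))
    (hdiag : (ρ g₀ : Matrix (Fin 2) (Fin 2) K) =
      Matrix.diagonal ![algebraMap A K lam₁, algebraMap A K lam₂])
    (I : Ideal A) (hI : I ≠ ⊤)
    (ϑ₁ ϑ₂ : G →* (A ⧸ I)ˣ)
    (hϑtr : ∀ g : G, Ideal.Quotient.mk I (tA g) = ↑(ϑ₁ g) + ↑(ϑ₂ g))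
    (hlift₂ : ∀ g : G,
      (↑(ψ₂ g) : ResidueField A) =
        Ideal.Quotient.factor (le_maximalIdeal hI) ↑(ϑ₂ g)) :
    ∀ g g' : G, ∃ a d : A,
      algebraMap A K a = (ρ g : Matrix (Fin 2) (Fin 2) K) 0 0 ∧
      algebraMap A K d = (ρ g : Matrix (Fin 2) (Fin 2) K) 1 1 ∧
      Ideal.Quotient.mk I a = ↑(ϑ₁ g) ∧
      Ideal.Quotient.mk I d = ↑(ϑ₂ g) ∧
      ∃ x ∈ I, algebraMap A K x =
        (ρ g : Matrix (Fin 2) (Fin 2) K) 0 1 * (ρ g' : Matrix (Fin 2) (Fin 2) K) 1 0 := by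
  have hψ : (ψ₁ g₀ : ResidueField A) ≠ ψ₂ g₀ := Units.val_injective.ne hg₀
  have hu : IsUnit (lam₁ - lam₂) :=
    (residue_ne_zero_iff_isUnit _).1 (by rwa [map_sub, hlam₁, hlam₂, sub_ne_zero])
  have htr₀ : tA g₀ = lam₁ + lam₂ := IsFractionRing.injective A K <| by simp [htr, hdiag]
  have htr₀₀ : tA (g₀ * g₀) = lam₁ ^ 2 + lam₂ ^ 2 :=
    IsFractionRing.injective A K <| by simp [htr, hdiag, sq]
  obtain ⟨hlam₁I, hlam₂I⟩ := mk_eq_and_mk_eq_of_add_eq_of_sq_add_sq_eq hchar (le_maximalIdeal hI)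
    (by rw [← htr₀, hϑtr]) (by rw [← htr₀₀, hϑtr]; simp [sq]) (by rwa [hlam₁, ← hlift₂])
  have htrK : algebraMap A K ∘ tA = fun g ↦ (ρ g : Matrix (Fin 2) (Fin 2) K).trace := funext htr
  have htrI : Ideal.Quotient.mk I ∘ tA = fun g ↦ (ϑ₁ g + ϑ₂ g : A ⧸ I) := funext hϑtr
  set a := diagCoeff tA g₀ lam₁ lam₂
  have haK (g : G) : algebraMap A K (a g) = (ρ g : Matrix (Fin 2) (Fin 2) K) 0 0 := by
    rw [map_diagCoeff _ hu, htrK]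
    exact diagCoeff_trace ((Units.coeHom _).comp ρ) (by simpa using hu.map (algebraMap A K))
      hdiag g
  have haI (g : G) : Ideal.Quotient.mk I (a g) = ϑ₁ g := by
    have huI := hu.map (Ideal.Quotient.mk I)
    rw [map_sub, hlam₁I, hlam₂I] at huI
    rw [map_diagCoeff _ hu, htrI, hlam₁I, hlam₂I, diagCoeff_add_char _ _ huI]
  intro g g'
  refine ⟨a g, tA g - a g, haK g, ?_, haI g, ?_, a (g * g') - a g * a g', ?_, ?_⟩
  · rw [map_sub, haK, htr, Matrix.trace_fin_two]; ring
  · rw [map_sub, haI, hϑtr]; ring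
  · rw [← Ideal.Quotient.eq_zero_iff_mem, map_sub, map_mul, haI, haI, haI, map_mul,
      Units.val_mul, sub_self]
  · rw [map_sub, map_mul, haK, haK, haK, map_mul]
    simp [Matrix.mul_apply]

/-- **Bellaïche–Chenevier.**  Let `(A, m, k)` be a complete local Noetherian
domain with `char k ≠ 2` and `ρ : G → GL₂(Frac A)` a representation with `tr ρ(G) ⊆ A` and
`tr ρ mod m = ψ₁ + ψ₂` for distinct characters `ψ₁ ψ₂ : G → kˣ`.  Fix `g₀` with
`ψ₁ g₀ ≠ ψ₂ g₀`, let `λ₁, λ₂ ∈ A` be the roots of the characteristic polynomial of `ρ g₀`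
(lifting `ψᵢ(g₀)`), and work in a basis in which `ρ g₀ = diag(λ₁, λ₂)`.  If `I ⊊ A` is an
ideal with `tr ρ mod I = ϑ₁ + ϑ₂` for characters `ϑᵢ` lifting `ψᵢ`, then for all `g, g'`:
the diagonal entries `a(g), d(g)` lie in `A` with `a(g) ≡ ϑ₁(g)`, `d(g) ≡ ϑ₂(g) mod I`,
and `b(g)c(g') ∈ I`. -/
theorem bellaiche_chenevier_lemma
    (A : Type*) [CommRing A] [IsDomain A] [IsLocalRing A] [IsNoetherianRing A]
    [IsAdicComplete (maximalIdeal A) A]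
    (hchar : ringChar (ResidueField A) ≠ 2)
    (K : Type*) [Field K] [Algebra A K] [IsFractionRing A K]
    (G : Type*) [Group G]
    (ρ : G →* GL (Fin 2) K)
    (tA : G → A)
    (htr : ∀ g : G, algebraMap A K (tA g) = Matrix.trace (ρ g : Matrix (Fin 2) (Fin 2) K))
    (ψ₁ ψ₂ : G →* (ResidueField A)ˣ) (hψ : ψ₁ ≠ ψ₂)
    (hres : ∀ g : G, residue A (tA g) = ↑(ψ₁ g) + ↑(ψ₂ g))
    (g₀ : G) (hg₀ : ψ₁ g₀ ≠ ψ₂ g₀)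
    (lam₁ lam₂ : A)
    (hlam₁ : residue A lam₁ = ↑(ψ₁ g₀)) (hlam₂ : residue A lam₂ = ↑(ψ₂ g₀))
    (hdiag : (ρ g₀ : Matrix (Fin 2) (Fin 2) K) =
      Matrix.diagonal ![algebraMap A K lam₁, algebraMap A K lam₂])
    (I : Ideal A) (hI : I ≠ ⊤)
    (ϑ₁ ϑ₂ : G →* (A ⧸ I)ˣ)
    (hϑtr : ∀ g : G, Ideal.Quotient.mk I (tA g) = ↑(ϑ₁ g) + ↑(ϑ₂ g))
    (hlift₁ : ∀ g : G,
      (↑(ψ₁ g) : ResidueField A) =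
        Ideal.Quotient.factor (le_maximalIdeal hI) ↑(ϑ₁ g))
    (hlift₂ : ∀ g : G,
      (↑(ψ₂ g) : ResidueField A) =
        Ideal.Quotient.factor (le_maximalIdeal hI) ↑(ϑ₂ g)) :
    ∀ g g' : G, ∃ a d : A,
      algebraMap A K a = (ρ g : Matrix (Fin 2) (Fin 2) K) 0 0 ∧
      algebraMap A K d = (ρ g : Matrix (Fin 2) (Fin 2) K) 1 1 ∧
      Ideal.Quotient.mk I a = ↑(ϑ₁ g) ∧
      Ideal.Quotient.mk I d = ↑(ϑ₂ g) ∧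
      ∃ x ∈ I, algebraMap A K x =
        (ρ g : Matrix (Fin 2) (Fin 2) K) 0 1 * (ρ g' : Matrix (Fin 2) (Fin 2) K) 1 0 :=
  bellaiche_chenevier_lemma_general A hchar K G ρ tA htr ψ₁ ψ₂ g₀ hg₀ lam₁ lam₂ hlam₁ hlam₂ hdiag I
    hI ϑ₁ ϑ₂ hϑtr hlift₂
end

section
/- Let O be the ring of integers of a finite extension of Q_p with uniformizer ϖ, V a 2-dimensional vector space over K = Frac(O), and ρ : G → Aut_K(V) a continuous irreducible representation of a compact group G with tr ρ mod ϖ = ψ_1 + ψ_2 for distinct characters ψ_1, ψ_2 : G → (O/ϖ)^×. Then the number of isomorphism classes of G-stable lattices in V equals ord_ϖ(I(ρ)) + 1, where I(ρ) is the reducibility ideal of O generated by the products b(g)c(g') of off-diagonal entries in a basis diagonalizing ρ(g_0) for g_0 with ψ_1(g_0) ≠ ψ_2(g_0). -/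
/-!
Since `lam₁ - lam₂` is a unit, the eigenprojections of `ρ g₀ = diag(lam₁, lam₂)` are integral,
so every `G`-stable lattice splits as `O x e₀ ⊕ O y e₁`; and integrality of the traces of `ρ g`
and `ρ (g₀ g)` makes the diagonal entries `a, d` of `ρ` integral, hence
`b(g) c(g') = a(g g') - a(g) a(g')` is integral too. Choose `g₁, g₂` with `b(g₁) c(g₂)` generating
`I(ρ) = (ϖ ^ n)`. Stability of `O x e₀ ⊕ O y e₁` under `g₁` and `g₂` gives `c(g₂) x = s₁ y` and
`b(g₁) y = s₂ x` with `s₁ s₂ = b(g₁) c(g₂)`, so `s₁ ~ ϖ ^ j` for some `j ≤ n` and the lattice is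
homothetic to `L_j = ϖ ^ j O e₀ ⊕ c(g₂) O e₁`. Conversely, an `O[G]`-isomorphism `L_j ≅ L_k`
preserves the eigenlines of `ρ g₀` and commutes with `ρ g₂`, which links them, so it is a
homothety; comparing the two summands gives `j = k`.
-/

open Pointwise

section

variable {O : Type*} [CommRing O] [IsDomain O] [IsDiscreteValuationRing O]
  {K : Type*} [Field K] [Algebra O K] [IsFractionRing O K]
  {G : Type*} [Group G]

/-- `T` is an `O`-lattice in `V = K²`. -/
def IsLat (T : Submodule O (Fin 2 → K)) : Prop :=
  T.FG ∧ Submodule.span K (T : Set (Fin 2 → K)) = ⊤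

/-- `T` is stable under the representation `ρ`. -/
def IsStable (ρ : G →* GL (Fin 2) K) (T : Submodule O (Fin 2 → K)) : Prop :=
  ∀ g : G, ∀ v ∈ T, Matrix.mulVec (ρ g : Matrix (Fin 2) (Fin 2) K) v ∈ T

/-- `T` and `T'` are isomorphic as `O[G]`-modules. -/
def LatIso (ρ : G →* GL (Fin 2) K) (T T' : Submodule O (Fin 2 → K)) : Prop :=
  ∃ e : T ≃ₗ[O] T', ∀ (g : G) (v : Fin 2 → K) (hv : v ∈ T)
    (hgv : Matrix.mulVec (ρ g : Matrix (Fin 2) (Fin 2) K) v ∈ T),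
    (e ⟨Matrix.mulVec (ρ g : Matrix (Fin 2) (Fin 2) K) v, hgv⟩ : Fin 2 → K) =
      Matrix.mulVec (ρ g : Matrix (Fin 2) (Fin 2) K) (e ⟨v, hv⟩)

end

open Matrix Submodule

theorem exists_associated_of_span_eq_span_singleton {R : Type*} [CommRing R] [IsDomain R]
    [IsLocalRing R] {S : Set R} {a : R} (ha : a ≠ 0) (h : Ideal.span S = Ideal.span {a}) :
    ∃ x ∈ S, Associated x a := by
  -- otherwise `(a) ≤ (a) 𝔪`, and cancelling `a` puts `1` in `𝔪`
  by_contra! hS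
  have hle : Ideal.span S ≤ Ideal.span {a} * IsLocalRing.maximalIdeal R := by
    refine Ideal.span_le.mpr fun x hx => ?_
    have hxa : x ∈ Ideal.span {a} := h ▸ Ideal.subset_span hx
    obtain ⟨t, rfl⟩ := Ideal.mem_span_singleton'.mp hxa
    exact Ideal.mem_span_singleton_mul.mpr
      ⟨t, fun ht => hS _ hx (associated_unit_mul_left a t ht), mul_comm _ _⟩
  obtain ⟨z, hz, haz⟩ :=
    Ideal.mem_span_singleton_mul.mp (hle (h ▸ Ideal.mem_span_singleton_self a))
  rw [mul_eq_left₀ ha] at haz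
  exact (IsLocalRing.maximalIdeal.isMaximal R).ne_top ((Ideal.eq_top_iff_one _).mpr (haz ▸ hz))

theorem exists_eq_span_singleton_of_fg {R L : Type*} [CommRing R] [IsDomain R]
    [IsPrincipalIdealRing R] [Field L] [Algebra R L] [IsFractionRing R L] {M : Submodule R L}
    (hM : M.FG) : ∃ z : L, M = R ∙ z :=
  (FractionalIdeal.isPrincipal ⟨M, FractionalIdeal.isFractional_of_fg hM⟩).principal

section Lattices

variable {O : Type*} [CommRing O] {K : Type*} [Field K] [Algebra O K]

variable (O) in
def diagLat (x y : K) : Submodule O (Fin 2 → K) :=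
  span O {Pi.single 0 x, Pi.single 1 y}

theorem mem_diagLat {x y : K} {v : Fin 2 → K} :
    v ∈ diagLat O x y ↔ v 0 ∈ O ∙ x ∧ v 1 ∈ O ∙ y := by
  simp only [diagLat, mem_span_pair, mem_span_singleton]
  constructor
  · rintro ⟨a, b, rfl⟩
    exact ⟨⟨a, by simp⟩, ⟨b, by simp⟩⟩
  · rintro ⟨⟨a, ha⟩, ⟨b, hb⟩⟩
    exact ⟨a, b, funext fun i => by fin_cases i <;> simp [ha, hb]⟩

theorem diagLat_eq_diagLat_iff {x y x' y' : K} :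
    diagLat O x y = diagLat O x' y' ↔ O ∙ x = O ∙ x' ∧ O ∙ y = O ∙ y' := by
  refine ⟨fun h => ⟨?_, ?_⟩, fun ⟨hx, hy⟩ => ext fun v => by rw [mem_diagLat, mem_diagLat, hx, hy]⟩
  · ext z
    simpa [mem_diagLat] using SetLike.ext_iff.mp h (Pi.single 0 z)
  · ext z
    simpa [mem_diagLat] using SetLike.ext_iff.mp h (Pi.single 1 z)

theorem smul_diagLat (s x y : K) : s • diagLat O x y = diagLat O (s * x) (s * y) := by
  simp [diagLat, smul_span, Set.smul_set_insert, ← Pi.single_smul]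

theorem isLat_diagLat {x y : K} (hx : x ≠ 0) (hy : y ≠ 0) : IsLat (diagLat O x y) := by
  refine ⟨fg_span (Set.toFinite _), eq_top_iff.mpr fun v _ => ?_⟩
  refine span_mono (R := K) subset_span (mem_span_pair.mpr ⟨v 0 / x, v 1 / y, ?_⟩)
  ext i; fin_cases i <;> simp [hx, hy]

theorem ne_zero_of_isLat_diagLat {x y : K} (h : IsLat (diagLat O x y)) : x ≠ 0 ∧ y ≠ 0 := by
  have key : ∀ i : Fin 2, (∀ v ∈ diagLat O x y, v i = 0) → False := fun i hi => by
    have hle : span K (diagLat O x y : Set (Fin 2 → K)) ≤ LinearMap.ker (LinearMap.proj i) :=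
      span_le.mpr hi
    rw [h.2] at hle
    simpa using hle (mem_top (x := Pi.single i (1 : K)))
  constructor
  · rintro rfl
    exact key 0 fun v hv => by simpa using (mem_diagLat.mp hv).1
  · rintro rfl
    exact key 1 fun v hv => by simpa using (mem_diagLat.mp hv).2

theorem eq_smul_of_apply_eq_smul {T T' : Submodule O (Fin 2 → K)} (e : T ≃ₗ[O] T') {α : K}
    (he : ∀ v (hv : v ∈ T), (e ⟨v, hv⟩ : Fin 2 → K) = α • v) : T' = α • T := by
  ext w
  rw [mem_smul_pointwise_iff_exists]
  refine ⟨fun hw => ⟨_, (e.symm ⟨w, hw⟩).2, ?_⟩, ?_⟩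
  · rw [← he _ (e.symm ⟨w, hw⟩).2, Subtype.coe_eta, e.apply_symm_apply]
  · rintro ⟨v, hv, rfl⟩
    exact he v hv ▸ (e ⟨v, hv⟩).2

end Lattices

section Representation

variable {O : Type*} [CommRing O] {K : Type*} [Field K] [Algebra O K] {G : Type*} [Group G]
  {ρ : G →* GL (Fin 2) K}

-- `LatIso ρ T T'` is by definition `∃ e : T ≃ₗ[O] T', IsEquivariant ρ e`.
variable (ρ) in
def IsEquivariant {T T' : Submodule O (Fin 2 → K)} (e : T ≃ₗ[O] T') : Prop :=
  ∀ (g : G) (v : Fin 2 → K) (hv : v ∈ T) (hgv : (ρ g).1 *ᵥ v ∈ T),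
    (e ⟨(ρ g).1 *ᵥ v, hgv⟩ : Fin 2 → K) = (ρ g).1 *ᵥ e ⟨v, hv⟩

theorem latIso_refl (T : Submodule O (Fin 2 → K)) : LatIso ρ T T :=
  ⟨LinearEquiv.refl O T, fun _ _ _ _ => rfl⟩

theorem LatIso.symm {T T' : Submodule O (Fin 2 → K)} (hT : IsStable ρ T) (h : LatIso ρ T T') :
    LatIso ρ T' T := by
  obtain ⟨e, he⟩ := h
  refine ⟨e.symm, fun g v hv hgv => ?_⟩
  set w := e.symm ⟨v, hv⟩
  have hw : e ⟨(ρ g).1 *ᵥ w, hT g _ w.2⟩ = ⟨(ρ g).1 *ᵥ v, hgv⟩ :=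
    Subtype.ext (by rw [he g w w.2, Subtype.coe_eta, e.apply_symm_apply])
  rw [← hw, e.symm_apply_apply]

theorem LatIso.trans {T₁ T₂ T₃ : Submodule O (Fin 2 → K)} (h₁₂ : LatIso ρ T₁ T₂)
    (h₂₃ : LatIso ρ T₂ T₃) : LatIso ρ T₁ T₃ := by
  obtain ⟨e₁, he₁⟩ := h₁₂
  obtain ⟨e₂, he₂⟩ := h₂₃
  refine ⟨e₁.trans e₂, fun g v hv hgv => ?_⟩
  have hmem : (ρ g).1 *ᵥ (e₁ ⟨v, hv⟩ : Fin 2 → K) ∈ T₂ := he₁ g v hv hgv ▸ (e₁ _).2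
  have h₁ : e₁ ⟨(ρ g).1 *ᵥ v, hgv⟩ = ⟨(ρ g).1 *ᵥ e₁ ⟨v, hv⟩, hmem⟩ := Subtype.ext (he₁ g v hv hgv)
  rw [LinearEquiv.trans_apply, h₁, he₂ g _ (e₁ ⟨v, hv⟩).2 hmem]
  rfl

theorem latIso_equivalence :
    Equivalence fun T T' : {T : Submodule O (Fin 2 → K) // IsLat T ∧ IsStable ρ T} =>
      LatIso ρ T.1 T'.1 :=
  ⟨fun T => latIso_refl T.1, fun {T _} h => h.symm T.2.2, fun h₁₂ h₂₃ => h₁₂.trans h₂₃⟩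

theorem latIso_smul {s : K} (hs : s ≠ 0) (T : Submodule O (Fin 2 → K)) : LatIso ρ T (s • T) :=
  ⟨T.equivMapOfInjective (DistribSMul.toLinearMap O _ s) fun _ _ => (smul_right_injective _ hs ·),
    fun g v _ _ => ((ρ g).1.mulVec_smul s v).symm⟩

theorem IsEquivariant.mulVec_apply_eq_smul {T T' : Submodule O (Fin 2 → K)} {e : T ≃ₗ[O] T'}
    (he : IsEquivariant ρ e) {g : G} {r : O} {v : Fin 2 → K} (hv : v ∈ T)
    (hr : (ρ g).1 *ᵥ v = r • v) : (ρ g).1 *ᵥ e ⟨v, hv⟩ = r • (e ⟨v, hv⟩ : Fin 2 → K) := by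
  have hgv : (ρ g).1 *ᵥ v ∈ T := hr ▸ T.smul_mem r hv
  rw [← he g v hv hgv]
  have : (⟨(ρ g).1 *ᵥ v, hgv⟩ : T) = r • ⟨v, hv⟩ := Subtype.ext hr
  rw [this, map_smul, coe_smul]

end Representation

section Integrality

variable {O : Type*} [CommRing O] {K : Type*} [Field K] [Algebra O K] {G : Type*} [Group G]
  {ρ : G →* GL (Fin 2) K}

variable (O) in
def reducibilityIdeal (ρ : G →* GL (Fin 2) K) : Ideal O :=
  Ideal.span {x | ∃ g g' : G, algebraMap O K x = (ρ g).1 0 1 * (ρ g').1 1 0}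

theorem val_map_mul_apply (g g' : G) (i j : Fin 2) :
    (ρ (g * g')).1 i j = (ρ g).1 i 0 * (ρ g').1 0 j + (ρ g).1 i 1 * (ρ g').1 1 j := by
  rw [map_mul, Units.val_mul, mul_apply, Fin.sum_univ_two]

theorem diag_mem_range_of_trace_mem_range {g₀ : G} {lam₁ lam₂ : O}
    (hdiag : (ρ g₀).1 = diagonal ![algebraMap O K lam₁, algebraMap O K lam₂])
    (hunit : IsUnit (lam₁ - lam₂)) (htr : ∀ g, (ρ g).1.trace ∈ (algebraMap O K).range) (g : G) :
    (ρ g).1 0 0 ∈ (algebraMap O K).range ∧ (ρ g).1 1 1 ∈ (algebraMap O K).range := by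
  obtain ⟨u, hu⟩ := hunit
  have hinv : algebraMap O K ↑u⁻¹ * (algebraMap O K lam₁ - algebraMap O K lam₂) = 1 := by
    rw [← map_sub, ← map_mul, ← hu, Units.inv_mul, map_one]
  -- `tr ρ(g₀ g) = lam₁ a(g) + lam₂ d(g)` and `tr ρ(g) = a(g) + d(g)` can be solved for `a(g)`
  have ha : (ρ g).1 0 0 = algebraMap O K ↑u⁻¹ *
      ((ρ (g₀ * g)).1.trace - algebraMap O K lam₂ * (ρ g).1.trace) := by
    simp only [trace_fin_two, val_map_mul_apply, hdiag, diagonal_apply_eq, cons_val_zero,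
      cons_val_one, diagonal_apply_ne _ zero_ne_one, diagonal_apply_ne _ one_ne_zero]
    linear_combination (-(ρ g).1 0 0) * hinv
  have ha_mem : (ρ g).1 0 0 ∈ (algebraMap O K).range := ha ▸ mul_mem (RingHom.mem_range_self _ _)
    (sub_mem (htr _) (mul_mem (RingHom.mem_range_self _ _) (htr g)))
  refine ⟨ha_mem, ?_⟩
  have hd : (ρ g).1 1 1 = (ρ g).1.trace - (ρ g).1 0 0 := by rw [trace_fin_two]; ring
  exact hd ▸ sub_mem (htr g) ha_mem

theorem offDiag_mul_mem_range (hA : ∀ g, (ρ g).1 0 0 ∈ (algebraMap O K).range) (g g' : G) :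
    (ρ g).1 0 1 * (ρ g').1 1 0 ∈ (algebraMap O K).range := by
  have h : (ρ g).1 0 1 * (ρ g').1 1 0 = (ρ (g * g')).1 0 0 - (ρ g).1 0 0 * (ρ g').1 0 0 := by
    rw [val_map_mul_apply]; ring
  exact h ▸ sub_mem (hA _) (mul_mem (hA g) (hA g'))

theorem offDiag_mul_mem_span_of_reducibilityIdeal_le
    (hBC : ∀ g g', (ρ g).1 0 1 * (ρ g').1 1 0 ∈ (algebraMap O K).range) {a : O}
    (h : reducibilityIdeal O ρ ≤ Ideal.span {a}) (g g' : G) :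
    (ρ g).1 0 1 * (ρ g').1 1 0 ∈ O ∙ algebraMap O K a := by
  obtain ⟨x, hx⟩ := hBC g g'
  obtain ⟨r, rfl⟩ := Ideal.mem_span_singleton'.mp (h (Ideal.subset_span ⟨g, g', hx⟩))
  exact mem_span_singleton.mpr ⟨r, by rw [← hx, map_mul, Algebra.smul_def]⟩

theorem exists_mem_span_offDiag_mul [IsDomain O] [IsLocalRing O] {a : O} (ha : a ≠ 0)
    (h : reducibilityIdeal O ρ = Ideal.span {a}) :
    ∃ g₁ g₂ : G, algebraMap O K a ∈ O ∙ ((ρ g₁).1 0 1 * (ρ g₂).1 1 0) := by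
  obtain ⟨x, ⟨g₁, g₂, hx⟩, u, rfl⟩ := exists_associated_of_span_eq_span_singleton ha h
  exact ⟨g₁, g₂, mem_span_singleton.mpr ⟨u, by rw [← hx, map_mul, mul_comm, Algebra.smul_def]⟩⟩

end Integrality

section StableLattices

variable {O : Type*} [CommRing O] {K : Type*} [Field K] [Algebra O K] {G : Type*} [Group G]
  {ρ : G →* GL (Fin 2) K} {g₀ : G} {lam₁ lam₂ : O}

theorem isStable_diagLat {x y : K} (hA : ∀ g, (ρ g).1 0 0 ∈ (algebraMap O K).range)
    (hD : ∀ g, (ρ g).1 1 1 ∈ (algebraMap O K).range) (hB : ∀ g, (ρ g).1 0 1 * y ∈ O ∙ x)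
    (hC : ∀ g, (ρ g).1 1 0 * x ∈ O ∙ y) : IsStable ρ (diagLat O x y) := by
  have hmul : ∀ {r w : K} (a : O), r ∈ (algebraMap O K).range → a • (r * w) ∈ O ∙ w := by
    rintro r w a ⟨r, rfl⟩
    rw [← Algebra.smul_def]
    exact smul_mem _ _ (smul_mem _ _ (mem_span_singleton_self w))
  intro g v hv
  obtain ⟨a, ha⟩ := mem_span_singleton.mp (mem_diagLat.mp hv).1
  obtain ⟨b, hb⟩ := mem_span_singleton.mp (mem_diagLat.mp hv).2
  simp only [mem_diagLat, mulVec_fin_two, cons_val_zero, cons_val_one, ← ha, ← hb,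
    mul_smul_comm]
  exact ⟨add_mem (hmul a (hA g)) (smul_mem _ b (hB g)),
    add_mem (smul_mem _ a (hC g)) (hmul b (hD g))⟩

theorem offDiag_mul_mem_of_isStable {x y : K} (h : IsStable ρ (diagLat O x y)) (g : G) :
    (ρ g).1 0 1 * y ∈ O ∙ x ∧ (ρ g).1 1 0 * x ∈ O ∙ y := by
  have h₀ := mem_diagLat.mp (h g (Pi.single 0 x) (subset_span (by simp)))
  have h₁ := mem_diagLat.mp (h g (Pi.single 1 y) (subset_span (by simp)))
  simp only [mulVec_fin_two, Pi.single_apply] at h₀ h₁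
  simpa using And.intro h₁.1 h₀.2

theorem single_apply_mem_of_isStable
    (hdiag : (ρ g₀).1 = diagonal ![algebraMap O K lam₁, algebraMap O K lam₂])
    (hunit : IsUnit (lam₁ - lam₂)) {T : Submodule O (Fin 2 → K)} (hT : IsStable ρ T)
    {v : Fin 2 → K} (hv : v ∈ T) : Pi.single 0 (v 0) ∈ T ∧ Pi.single 1 (v 1) ∈ T := by
  -- the eigenprojection `(ρ g₀ - lam₂) / (lam₁ - lam₂)` onto the first line is integral
  have hproj : (lam₁ - lam₂) • Pi.single 0 (v 0) = (ρ g₀).1 *ᵥ v - lam₂ • v := by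
    ext i; fin_cases i <;> simp [hdiag, Algebra.smul_def, sub_mul]
  have h₀ : Pi.single 0 (v 0) ∈ T :=
    (smul_mem_iff_of_isUnit T hunit).mp (hproj ▸ sub_mem (hT g₀ v hv) (smul_mem _ _ hv))
  have h₁ : Pi.single 1 (v 1) = v - Pi.single 0 (v 0) := by
    ext i; fin_cases i <;> simp
  exact ⟨h₀, h₁ ▸ sub_mem hv h₀⟩

theorem exists_eq_diagLat [IsDomain O] [IsPrincipalIdealRing O] [IsFractionRing O K]
    (hdiag : (ρ g₀).1 = diagonal ![algebraMap O K lam₁, algebraMap O K lam₂])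
    (hunit : IsUnit (lam₁ - lam₂)) {T : Submodule O (Fin 2 → K)} (hT : IsLat T)
    (hs : IsStable ρ T) : ∃ x y : K, T = diagLat O x y := by
  obtain ⟨x, hx⟩ := exists_eq_span_singleton_of_fg (hT.1.map (LinearMap.proj (R := O) 0))
  obtain ⟨y, hy⟩ := exists_eq_span_singleton_of_fg (hT.1.map (LinearMap.proj (R := O) 1))
  refine ⟨x, y, ext fun v => ⟨fun hv => mem_diagLat.mpr ⟨hx ▸ mem_map_of_mem hv,
    hy ▸ mem_map_of_mem hv⟩, fun hv => ?_⟩⟩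
  rw [mem_diagLat, ← hx, ← hy] at hv
  obtain ⟨w, hw, hw₀⟩ := mem_map.mp hv.1
  obtain ⟨w', hw', hw₁⟩ := mem_map.mp hv.2
  have hv' : v = Pi.single 0 (w 0) + Pi.single 1 (w' 1) := by
    ext i; fin_cases i <;> simp [← hw₀, ← hw₁]
  exact hv' ▸ add_mem (single_apply_mem_of_isStable hdiag hunit hs hw).1
    (single_apply_mem_of_isStable hdiag hunit hs hw').2

end StableLattices

section Classification

variable {O : Type*} [CommRing O] {K : Type*} [Field K] [Algebra O K] {G : Type*} [Group G]
  {ρ : G →* GL (Fin 2) K} {g₀ g₁ g₂ : G} {lam₁ lam₂ ϖ : O} {n : ℕ}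

theorem lowerLeft_mem_span (hϖn : algebraMap O K ϖ ^ n ≠ 0)
    (hBC : ∀ g g', (ρ g).1 0 1 * (ρ g').1 1 0 ∈ O ∙ (algebraMap O K ϖ ^ n))
    (hgen : algebraMap O K ϖ ^ n ∈ O ∙ ((ρ g₁).1 0 1 * (ρ g₂).1 1 0)) (g : G) :
    (ρ g).1 1 0 ∈ O ∙ (ρ g₂).1 1 0 := by
  obtain ⟨r, hr⟩ := mem_span_singleton.mp hgen
  obtain ⟨s, hs⟩ := mem_span_singleton.mp (hBC g₁ g)
  have hb : (ρ g₁).1 0 1 ≠ 0 := by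
    rintro h
    rw [h, zero_mul, smul_zero] at hr
    exact hϖn hr.symm
  refine mem_span_singleton.mpr ⟨s * r, mul_left_cancel₀ hb ?_⟩
  rw [← hs, ← hr, mul_smul_comm, mul_smul]

theorem isStable_diagLat_pow (hϖn : algebraMap O K ϖ ^ n ≠ 0)
    (hA : ∀ g, (ρ g).1 0 0 ∈ (algebraMap O K).range)
    (hD : ∀ g, (ρ g).1 1 1 ∈ (algebraMap O K).range)
    (hBC : ∀ g g', (ρ g).1 0 1 * (ρ g').1 1 0 ∈ O ∙ (algebraMap O K ϖ ^ n))
    (hgen : algebraMap O K ϖ ^ n ∈ O ∙ ((ρ g₁).1 0 1 * (ρ g₂).1 1 0)) {j : ℕ} (hj : j ≤ n) :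
    IsStable ρ (diagLat O (algebraMap O K ϖ ^ j) ((ρ g₂).1 1 0)) := by
  have hle : O ∙ (algebraMap O K ϖ ^ n) ≤ O ∙ (algebraMap O K ϖ ^ j) :=
    (span_singleton_le_iff_mem _ _).mpr (mem_span_singleton.mpr ⟨ϖ ^ (n - j), by
      rw [Algebra.smul_def, map_pow, ← pow_add, Nat.sub_add_cancel hj]⟩)
  refine isStable_diagLat hA hD (fun g => hle (hBC g g₂)) fun g => ?_
  obtain ⟨r, hr⟩ := mem_span_singleton.mp (lowerLeft_mem_span hϖn hBC hgen g)
  exact mem_span_singleton.mpr ⟨r * ϖ ^ j, by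
    rw [← hr, Algebra.smul_def, Algebra.smul_def, map_mul, map_pow]; ring⟩

theorem exists_latIso_diagLat_pow [IsDomain O] [IsDiscreteValuationRing O] [IsFractionRing O K]
    (hϖ : Irreducible ϖ) (hdiag : (ρ g₀).1 = diagonal ![algebraMap O K lam₁, algebraMap O K lam₂])
    (hunit : IsUnit (lam₁ - lam₂))
    (hgen : algebraMap O K ϖ ^ n ∈ O ∙ ((ρ g₁).1 0 1 * (ρ g₂).1 1 0))
    {T : Submodule O (Fin 2 → K)} (hT : IsLat T) (hs : IsStable ρ T) :
    ∃ j ≤ n, LatIso ρ (diagLat O (algebraMap O K ϖ ^ j) ((ρ g₂).1 1 0)) T := by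
  obtain ⟨x, y, rfl⟩ := exists_eq_diagLat hdiag hunit hT hs
  obtain ⟨hx, hy⟩ := ne_zero_of_isLat_diagLat hT
  obtain ⟨s₁, hs₁⟩ := mem_span_singleton.mp (offDiag_mul_mem_of_isStable hs g₂).2
  obtain ⟨s₂, hs₂⟩ := mem_span_singleton.mp (offDiag_mul_mem_of_isStable hs g₁).1
  obtain ⟨r, hr⟩ := mem_span_singleton.mp hgen
  -- `s₁ s₂ = b(g₁) c(g₂)` divides `ϖ ^ n`
  have hdvd : s₁ ∣ ϖ ^ n := ⟨r * s₂, IsFractionRing.injective O K <|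
    mul_right_cancel₀ (mul_ne_zero hx hy) <| by
      rw [Algebra.smul_def] at hs₁ hs₂ hr
      rw [map_pow, ← hr, map_mul, map_mul]
      linear_combination (-(algebraMap O K r * algebraMap O K s₂ * x)) * hs₁ -
        (algebraMap O K r * (ρ g₂).1 1 0 * x) * hs₂⟩
  obtain ⟨j, hj, u, hu⟩ := (dvd_prime_pow hϖ.prime n).mp hdvd
  have hπ : algebraMap O K ϖ ^ j ≠ 0 :=
    pow_ne_zero _ ((map_ne_zero_iff _ (IsFractionRing.injective O K)).mpr hϖ.ne_zero)
  have hT_eq : diagLat O x y = (x / algebraMap O K ϖ ^ j) •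
      diagLat O (algebraMap O K ϖ ^ j) ((ρ g₂).1 1 0) := by
    rw [smul_diagLat, div_mul_cancel₀ _ hπ, diagLat_eq_diagLat_iff]
    refine ⟨rfl, ?_⟩
    have hinv : algebraMap O K ↑u⁻¹ * algebraMap O K ↑u = 1 := by
      rw [← map_mul, Units.inv_mul, map_one]
    have hc : x / algebraMap O K ϖ ^ j * (ρ g₂).1 1 0 = (↑u⁻¹ : O) • y := by
      rw [Algebra.smul_def, div_mul_eq_mul_div, div_eq_iff hπ, mul_comm x, ← hs₁, ← map_pow, ← hu,
        map_mul, Algebra.smul_def]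
      linear_combination (-(algebraMap O K s₁ * y)) * hinv
    rw [hc, span_singleton_smul_eq u⁻¹.isUnit]
  exact ⟨j, hj, hT_eq ▸ latIso_smul (div_ne_zero hx hπ) _⟩

end Classification

section Rigidity

variable {O : Type*} [CommRing O] {K : Type*} [Field K] [Algebra O K] {G : Type*} [Group G]
  {ρ : G →* GL (Fin 2) K} {g₀ g₂ : G} {lam₁ lam₂ : O}

theorem IsEquivariant.apply_single_apply_eq_zero
    (hdiag : (ρ g₀).1 = diagonal ![algebraMap O K lam₁, algebraMap O K lam₂])
    (hne : algebraMap O K lam₁ ≠ algebraMap O K lam₂)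
    {T T' : Submodule O (Fin 2 → K)} {e : T ≃ₗ[O] T'} (he : IsEquivariant ρ e)
    {i j : Fin 2} (hij : i ≠ j) {z : K} (hz : Pi.single i z ∈ T) :
    (e ⟨Pi.single i z, hz⟩ : Fin 2 → K) j = 0 := by
  have hr : (ρ g₀).1 *ᵥ Pi.single i z = ![lam₁, lam₂] i • Pi.single i z := by
    ext k; fin_cases i <;> fin_cases k <;> simp [hdiag, Algebra.smul_def]
  have h := congrFun (he.mulVec_apply_eq_smul hz hr) j
  rw [hdiag, mulVec_diagonal, Pi.smul_apply, ← algebraMap_smul K, smul_eq_mul] at h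
  refine (mul_eq_mul_right_iff.mp h).resolve_left ?_
  fin_cases i <;> fin_cases j <;> simp_all [eq_comm]

theorem IsEquivariant.exists_apply_eq_smul
    (hdiag : (ρ g₀).1 = diagonal ![algebraMap O K lam₁, algebraMap O K lam₂])
    (hne : algebraMap O K lam₁ ≠ algebraMap O K lam₂) (hc : (ρ g₂).1 1 0 ≠ 0) {x y : K}
    (hx : x ≠ 0) (hs : IsStable ρ (diagLat O x y)) {T' : Submodule O (Fin 2 → K)}
    {e : diagLat O x y ≃ₗ[O] T'} (he : IsEquivariant ρ e) :
    ∃ α : K, ∀ v (hv : v ∈ diagLat O x y), (e ⟨v, hv⟩ : Fin 2 → K) = α • v := by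
  have hx₀ : Pi.single 0 x ∈ diagLat O x y := subset_span (by simp)
  have hy₁ : Pi.single 1 y ∈ diagLat O x y := subset_span (by simp)
  obtain ⟨u₀, hu₀⟩ : ∃ u, (e ⟨_, hx₀⟩ : Fin 2 → K) = u := ⟨_, rfl⟩
  obtain ⟨u₁, hu₁⟩ : ∃ u, (e ⟨_, hy₁⟩ : Fin 2 → K) = u := ⟨_, rfl⟩
  have hu₀₁ : u₀ 1 = 0 := hu₀ ▸ he.apply_single_apply_eq_zero hdiag hne (by decide) hx₀
  have hu₁₀ : u₁ 0 = 0 := hu₁ ▸ he.apply_single_apply_eq_zero hdiag hne (by decide) hy₁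
  -- `c(g₂) ≠ 0` ties the scalars by which `e` acts on the two eigenlines of `ρ g₀`
  obtain ⟨r₀, r₁, hr⟩ := mem_span_pair.mp (hs g₂ _ hx₀)
  have hr₁ : algebraMap O K r₁ * y = (ρ g₂).1 1 0 * x := by
    simpa [mulVec_fin_two, Algebra.smul_def] using congrFun hr 1
  have hg₂ : r₀ • u₀ + r₁ • u₁ = (ρ g₂).1 *ᵥ u₀ := by
    have : (⟨(ρ g₂).1 *ᵥ Pi.single 0 x, hs g₂ _ hx₀⟩ : diagLat O x y) =
        r₀ • ⟨_, hx₀⟩ + r₁ • ⟨_, hy₁⟩ := Subtype.ext hr.symm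
    rw [← hu₀, ← he g₂ _ hx₀ (hs g₂ _ hx₀), this, map_add, map_smul, map_smul, coe_add, coe_smul,
      coe_smul, hu₀, hu₁]
  have hu₁₁ : u₁ 1 * x = y * u₀ 0 := by
    have h := congrFun hg₂ 1
    rw [Pi.add_apply, Pi.smul_apply, Pi.smul_apply] at h
    simp only [Algebra.smul_def, mulVec_fin_two, cons_val_one, cons_val_zero, hu₀₁, mul_zero,
      zero_add, add_zero] at h
    have hr₁0 : algebraMap O K r₁ ≠ 0 := by
      rintro h0
      rw [h0, zero_mul] at hr₁
      exact mul_ne_zero hc hx hr₁.symm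
    apply mul_left_cancel₀ hr₁0
    linear_combination x * h - u₀ 0 * hr₁
  set α := u₀ 0 / x
  have hu₀' : u₀ = α • Pi.single 0 x :=
    funext <| Fin.forall_fin_two.mpr ⟨by simp [α, hx], by simp [hu₀₁]⟩
  have hu₁' : u₁ = α • Pi.single 1 y := funext <| Fin.forall_fin_two.mpr ⟨by simp [hu₁₀], by
    rw [Pi.smul_apply, Pi.single_eq_same, smul_eq_mul, div_mul_eq_mul_div, eq_div_iff hx]
    linear_combination hu₁₁⟩
  refine ⟨α, fun v hv => ?_⟩
  obtain ⟨a, b, rfl⟩ := mem_span_pair.mp hv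
  have : (⟨_, hv⟩ : diagLat O x y) =
      a • ⟨Pi.single 0 x, hx₀⟩ + b • ⟨Pi.single 1 y, hy₁⟩ := rfl
  rw [this, map_add, map_smul, map_smul, coe_add, coe_smul, coe_smul, hu₀, hu₁, hu₀', hu₁',
    smul_add, smul_comm a, smul_comm b]

theorem le_of_latIso_diagLat_pow [IsDomain O] [IsFractionRing O K] {ϖ : O} (hϖ : Irreducible ϖ)
    (hdiag : (ρ g₀).1 = diagonal ![algebraMap O K lam₁, algebraMap O K lam₂])
    (hne : algebraMap O K lam₁ ≠ algebraMap O K lam₂) (hc : (ρ g₂).1 1 0 ≠ 0) {j k : ℕ}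
    (hs : IsStable ρ (diagLat O (algebraMap O K ϖ ^ j) ((ρ g₂).1 1 0)))
    (h : LatIso ρ (diagLat O (algebraMap O K ϖ ^ j) ((ρ g₂).1 1 0))
      (diagLat O (algebraMap O K ϖ ^ k) ((ρ g₂).1 1 0))) : j ≤ k := by
  obtain ⟨e, he⟩ := h
  have hπ : algebraMap O K ϖ ≠ 0 :=
    (map_ne_zero_iff _ (IsFractionRing.injective O K)).mpr hϖ.ne_zero
  obtain ⟨α, hα⟩ :=
    IsEquivariant.exists_apply_eq_smul (e := e) hdiag hne hc (pow_ne_zero j hπ) hs he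
  have hk := eq_smul_of_apply_eq_smul e hα
  rw [smul_diagLat, diagLat_eq_diagLat_iff] at hk
  -- the scalar `α` is integral, since it preserves `O ∙ c(g₂)`
  obtain ⟨a, ha⟩ := mem_span_singleton.mp (hk.2 ▸ mem_span_singleton_self (α * (ρ g₂).1 1 0))
  obtain ⟨b, hb⟩ := mem_span_singleton.mp (hk.1 ▸ mem_span_singleton_self (algebraMap O K ϖ ^ k))
  have hαa : α = algebraMap O K a := mul_right_cancel₀ hc (by rw [← ha, Algebra.smul_def])
  refine (pow_dvd_pow_iff hϖ.ne_zero hϖ.not_isUnit).mp ⟨b * a, IsFractionRing.injective O K ?_⟩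
  rw [map_pow, ← hb, hαa, Algebra.smul_def, map_mul, map_mul, map_pow]
  ring

end Rigidity

section Counting

variable {O : Type*} [CommRing O] [IsDomain O] [IsDiscreteValuationRing O]
  {K : Type*} [Field K] [Algebra O K] [IsFractionRing O K] {G : Type*} [Group G]
  {ρ : G →* GL (Fin 2) K} {g₀ g₁ g₂ : G} {lam₁ lam₂ ϖ : O} {n : ℕ}

theorem card_quot_latIso_eq (hϖ : Irreducible ϖ)
    (hdiag : (ρ g₀).1 = diagonal ![algebraMap O K lam₁, algebraMap O K lam₂])
    (hunit : IsUnit (lam₁ - lam₂)) (hA : ∀ g, (ρ g).1 0 0 ∈ (algebraMap O K).range)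
    (hD : ∀ g, (ρ g).1 1 1 ∈ (algebraMap O K).range)
    (hBC : ∀ g g', (ρ g).1 0 1 * (ρ g').1 1 0 ∈ O ∙ (algebraMap O K ϖ ^ n))
    (hgen : algebraMap O K ϖ ^ n ∈ O ∙ ((ρ g₁).1 0 1 * (ρ g₂).1 1 0)) :
    Nat.card (Quot fun T T' : {T : Submodule O (Fin 2 → K) // IsLat T ∧ IsStable ρ T} =>
      LatIso ρ T.1 T'.1) = n + 1 := by
  have hπ : algebraMap O K ϖ ≠ 0 :=
    (map_ne_zero_iff _ (IsFractionRing.injective O K)).mpr hϖ.ne_zero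
  have hϖn : algebraMap O K ϖ ^ n ≠ 0 := pow_ne_zero n hπ
  have hne : algebraMap O K lam₁ ≠ algebraMap O K lam₂ := fun h =>
    hunit.ne_zero (sub_eq_zero.mpr (IsFractionRing.injective O K h))
  have hc : (ρ g₂).1 1 0 ≠ 0 := fun h => hϖn (by simpa [h] using hgen)
  have hstd : ∀ j : Fin (n + 1),
      IsStable ρ (diagLat O (algebraMap O K ϖ ^ (j : ℕ)) ((ρ g₂).1 1 0)) := fun j =>
    isStable_diagLat_pow hϖn hA hD hBC hgen (Nat.lt_succ_iff.mp j.2)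
  refine (Nat.card_eq_of_bijective (fun j : Fin (n + 1) => Quot.mk _
    ⟨_, isLat_diagLat (pow_ne_zero _ hπ) hc, hstd j⟩) ⟨fun j k hjk => ?_, ?_⟩).symm.trans
    (Nat.card_fin _)
  · have h := latIso_equivalence.eqvGen_iff.mp (Quot.eqvGen_exact hjk)
    exact Fin.ext (le_antisymm (le_of_latIso_diagLat_pow hϖ hdiag hne hc (hstd j) h)
      (le_of_latIso_diagLat_pow hϖ hdiag hne hc (hstd k) (h.symm (hstd j))))
  · refine Quot.ind fun T => ?_
    obtain ⟨j, hj, h⟩ := exists_latIso_diagLat_pow hϖ hdiag hunit hgen T.2.1 T.2.2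
    exact ⟨⟨j, Nat.lt_succ_of_le hj⟩, Quot.sound h⟩

end Counting

section

variable {O : Type*} [CommRing O] [IsDomain O] [IsDiscreteValuationRing O]
  {K : Type*} [Field K] [Algebra O K] [IsFractionRing O K]
  {G : Type*} [Group G]

theorem card_latticeClasses_eq_ord_reducibilityIdeal_add_one_general
    (ϖ : O) (hϖ : Irreducible ϖ)
    (ρ : G →* GL (Fin 2) K)
    (ψ₁ ψ₂ : G →* (O ⧸ Ideal.span {ϖ})ˣ)
    (htr : ∀ g : G, ∃ t : O,
      algebraMap O K t = Matrix.trace (ρ g : Matrix (Fin 2) (Fin 2) K) ∧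
      Ideal.Quotient.mk (Ideal.span {ϖ}) t = ↑(ψ₁ g) + ↑(ψ₂ g))
    (g₀ : G) (hg₀ : ψ₁ g₀ ≠ ψ₂ g₀)
    (lam₁ lam₂ : O)
    (hlam₁ : Ideal.Quotient.mk (Ideal.span {ϖ}) lam₁ = ↑(ψ₁ g₀))
    (hlam₂ : Ideal.Quotient.mk (Ideal.span {ϖ}) lam₂ = ↑(ψ₂ g₀))
    (hdiag : (ρ g₀ : Matrix (Fin 2) (Fin 2) K) =
      Matrix.diagonal ![algebraMap O K lam₁, algebraMap O K lam₂])
    (n : ℕ)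
    (hord : Ideal.span {x : O | ∃ g g' : G,
        algebraMap O K x = (ρ g : Matrix (Fin 2) (Fin 2) K) 0 1 *
          (ρ g' : Matrix (Fin 2) (Fin 2) K) 1 0} = Ideal.span {ϖ ^ n}) :
    Nat.card (Quot (fun T T' : {T : Submodule O (Fin 2 → K) // IsLat T ∧ IsStable ρ T} =>
      LatIso ρ T.1 T'.1)) = n + 1 := by
  have hunit : IsUnit (lam₁ - lam₂) := by
    rw [← IsLocalRing.notMem_maximalIdeal,
      (IsDiscreteValuationRing.irreducible_iff_uniformizer ϖ).mp hϖ,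
      ← Ideal.Quotient.eq_zero_iff_mem, map_sub, hlam₁, hlam₂, sub_eq_zero]
    exact fun h => hg₀ (Units.ext h)
  have hdiag_mem :=
    diag_mem_range_of_trace_mem_range hdiag hunit fun g => (htr g).imp fun _ h => h.1
  have hA : ∀ g, (ρ g).1 0 0 ∈ (algebraMap O K).range := fun g => (hdiag_mem g).1
  obtain ⟨g₁, g₂, hgen⟩ := exists_mem_span_offDiag_mul (pow_ne_zero n hϖ.ne_zero) hord
  have hBC := offDiag_mul_mem_span_of_reducibilityIdeal_le (offDiag_mul_mem_range hA) hord.le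
  rw [map_pow] at hgen hBC
  exact card_quot_latIso_eq hϖ hdiag hunit hA (fun g => (hdiag_mem g).2) hBC hgen

/-- For `ρ : G → Aut_K(V)` continuous irreducible (`G` compact) with
residual semi-simplification `ψ₁ ⊕ ψ₂`, `ψ₁ ≠ ψ₂`, in a basis diagonalizing `ρ g₀`
(`ψ₁ g₀ ≠ ψ₂ g₀`), the number of isomorphism classes of `G`-stable lattices equals
`ord_ϖ I(ρ) + 1`, where `I(ρ)` is the reducibility ideal generated by the products
`b(g)c(g')` of the off-diagonal entries. -/
theorem card_latticeClasses_eq_ord_reducibilityIdeal_add_one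
    (ϖ : O) (hϖ : Irreducible ϖ)
    [TopologicalSpace K] [IsTopologicalRing K]
    [TopologicalSpace G] [IsTopologicalGroup G] [CompactSpace G]
    (ρ : G →* GL (Fin 2) K)
    (hcont : Continuous fun g : G => (ρ g : Matrix (Fin 2) (Fin 2) K))
    (hirr : ∀ W : Submodule K (Fin 2 → K),
      (∀ g : G, ∀ v ∈ W, Matrix.mulVec (ρ g : Matrix (Fin 2) (Fin 2) K) v ∈ W) →
      W = ⊥ ∨ W = ⊤)
    (ψ₁ ψ₂ : G →* (O ⧸ Ideal.span {ϖ})ˣ) (hψ : ψ₁ ≠ ψ₂)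
    (htr : ∀ g : G, ∃ t : O,
      algebraMap O K t = Matrix.trace (ρ g : Matrix (Fin 2) (Fin 2) K) ∧
      Ideal.Quotient.mk (Ideal.span {ϖ}) t = ↑(ψ₁ g) + ↑(ψ₂ g))
    (g₀ : G) (hg₀ : ψ₁ g₀ ≠ ψ₂ g₀)
    (lam₁ lam₂ : O)
    (hlam₁ : Ideal.Quotient.mk (Ideal.span {ϖ}) lam₁ = ↑(ψ₁ g₀))
    (hlam₂ : Ideal.Quotient.mk (Ideal.span {ϖ}) lam₂ = ↑(ψ₂ g₀))
    (hdiag : (ρ g₀ : Matrix (Fin 2) (Fin 2) K) =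
      Matrix.diagonal ![algebraMap O K lam₁, algebraMap O K lam₂])
    (n : ℕ)
    (hord : Ideal.span {x : O | ∃ g g' : G,
        algebraMap O K x = (ρ g : Matrix (Fin 2) (Fin 2) K) 0 1 *
          (ρ g' : Matrix (Fin 2) (Fin 2) K) 1 0} = Ideal.span {ϖ ^ n}) :
    Nat.card (Quot (fun T T' : {T : Submodule O (Fin 2 → K) // IsLat T ∧ IsStable ρ T} =>
      LatIso ρ T.1 T'.1)) = n + 1 :=
  card_latticeClasses_eq_ord_reducibilityIdeal_add_one_general ϖ hϖ ρ ψ₁ ψ₂ htr g₀ hg₀ lam₁ lam₂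
    hlam₁ hlam₂ hdiag n hord

end
end

section
/- Let ρ : G → Aut_K(V) be as above and x ∈ X(ρ) a fixed vertex with representative lattice T. Then: x has no neighbor in X(ρ) iff ρ̄_T is irreducible; x has exactly one neighbor in X(ρ) iff ρ̄_T is reducible but indecomposable; x has exactly two neighbors in X(ρ) iff ρ̄_T decomposes as a direct sum of two distinct characters. -/
/-!
A neighbour of `[T]` has a representative `T'` with `ϖT ⊊ T' ⊊ T`, i.e. a line of the plane
`T / ϖT` over the residue field, and two such lattices are homothetic only if they are equal.
So the fixed neighbours of `[T]` are in bijection with the `ρ̄_T`-stable lines. Two distinct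
lines of a plane are complementary. If `ρ̄_T` stabilises two lines, acting on them by characters
`χ` and `χ'`, then for `χ ≢ χ'` a third stable line `⟨p a + q b⟩` (with `p, q` units) would be an
eigenline of `ρ̄_T(g)` for an eigenvalue congruent to both, while for `χ ≡ χ'` the group acts on
`T / ϖT` by scalars and the line of `a + b` is stable as well.
-/

open Pointwise

section

variable (O : Type*) [CommRing O] [IsDomain O] [IsDiscreteValuationRing O]
  (K : Type*) [Field K] [Algebra O K] [IsFractionRing O K]

/-- Lattices in `V = K²`. -/
def BTLat : Type _ :=
  {T : Submodule O (Fin 2 → K) // T.FG ∧ Submodule.span K (T : Set (Fin 2 → K)) = ⊤}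

/-- Vertices of the Bruhat–Tits tree: homothety classes of lattices. -/
def BTVtx : Type _ := Quot (fun T T' : BTLat O K => ∃ c : Kˣ, T'.1 = c • T.1)

variable {O K} in
/-- The class of a lattice. -/
def BTcls (T : BTLat O K) : BTVtx O K := Quot.mk _ T

/-- Adjacency in the Bruhat–Tits tree. -/
def BTtree (ϖ : O) : SimpleGraph (BTVtx O K) where
  Adj x y := x ≠ y ∧
    ((∃ T T' : BTLat O K, BTcls T = x ∧ BTcls T' = y ∧ ϖ • T.1 ≤ T'.1 ∧ T'.1 ≤ T.1) ∨
     (∃ T T' : BTLat O K, BTcls T = y ∧ BTcls T' = x ∧ ϖ • T.1 ≤ T'.1 ∧ T'.1 ≤ T.1))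
  symm := by
    constructor
    rintro x y ⟨hne, h⟩
    exact ⟨hne.symm, h.symm⟩
  loopless := ⟨fun x h => h.1 rfl⟩

variable {O K}

variable {G : Type*} [Group G]

/-- A submodule is stable under `ρ`. -/
def BTStable (ρ : G →* GL (Fin 2) K) (T : Submodule O (Fin 2 → K)) : Prop :=
  ∀ g : G, ∀ v ∈ T, Matrix.mulVec (ρ g : Matrix (Fin 2) (Fin 2) K) v ∈ T

/-- The set `X(ρ)` of vertices fixed by `G`. -/
def fixedVtx (ρ : G →* GL (Fin 2) K) : Set (BTVtx O K) :=
  {x | ∃ T : BTLat O K, BTcls T = x ∧ BTStable ρ T.1}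

theorem ne_of_lt_of_inf_le {α : Type*} [SemilatticeInf α] {a b c : α} (hc : c < a)
    (h : a ⊓ b ≤ c) : a ≠ b := by
  rintro rfl
  exact hc.not_ge (inf_idem a ▸ h)

theorem Set.nonempty_iff_of_encard_eq {α β : Type*} {s : Set α} {t : Set β}
    (h : s.encard = t.encard) : s.Nonempty ↔ t.Nonempty := by
  rw [← Set.encard_pos, h, Set.encard_pos]

section Lines

variable {O V : Type*} [CommRing O] [AddCommGroup V] [Module O V] {ϖ : O}

theorem Submodule.unit_smul_eq (u : Oˣ) (N : Submodule O V) : (u : O) • N = N :=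
  le_antisymm (Submodule.smul_le_self_of_tower _ N) fun v hv =>
    (Submodule.mem_smul_pointwise_iff_exists _ _ _).2
      ⟨(↑u⁻¹ : O) • v, N.smul_mem _ hv, by rw [smul_smul, Units.mul_inv, one_smul]⟩

def IsBasisPair (T : Submodule O V) (e₀ e₁ : V) : Prop :=
  LinearIndependent O ![e₀, e₁] ∧ Submodule.span O {e₀, e₁} = T

namespace IsBasisPair

variable {T : Submodule O V} {e₀ e₁ v : V}

theorem mem_iff (hb : IsBasisPair T e₀ e₁) : v ∈ T ↔ ∃ x y : O, x • e₀ + y • e₁ = v := by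
  rw [← hb.2, Submodule.mem_span_pair]

theorem left_mem (hb : IsBasisPair T e₀ e₁) : e₀ ∈ T :=
  hb.2 ▸ Submodule.subset_span (Set.mem_insert _ _)

theorem right_mem (hb : IsBasisPair T e₀ e₁) : e₁ ∈ T :=
  hb.2 ▸ Submodule.subset_span (Set.mem_insert_of_mem _ rfl)

theorem eq_zero_of_smul_add_smul_eq_zero (hb : IsBasisPair T e₀ e₁) {x y : O}
    (h : x • e₀ + y • e₁ = 0) : x = 0 ∧ y = 0 :=
  LinearIndependent.pair_iff.1 hb.1 x y h

theorem swap (hb : IsBasisPair T e₀ e₁) : IsBasisPair T e₁ e₀ := by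
  refine ⟨LinearIndependent.pair_iff.2 fun x y h => ?_, by rw [Set.pair_comm, hb.2]⟩
  rw [add_comm] at h
  exact (hb.eq_zero_of_smul_add_smul_eq_zero h).symm

theorem unit_smul_add (hb : IsBasisPair T e₀ e₁) (u : Oˣ) (y : O) :
    IsBasisPair T ((u : O) • e₀ + y • e₁) e₁ := by
  refine ⟨LinearIndependent.pair_iff.2 fun s t h => ?_, le_antisymm ?_ fun v hv => ?_⟩
  · have h' : (s * u) • e₀ + (s * y + t) • e₁ = 0 := by rw [← h]; module
    obtain ⟨hs, ht⟩ := hb.eq_zero_of_smul_add_smul_eq_zero h'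
    have hs : s = 0 := (Units.mul_left_eq_zero u).1 hs
    exact ⟨hs, by simpa [hs] using ht⟩
  · rw [Submodule.span_le, Set.insert_subset_iff, Set.singleton_subset_iff]
    exact ⟨T.add_mem (T.smul_mem _ hb.left_mem) (T.smul_mem _ hb.right_mem), hb.right_mem⟩
  · obtain ⟨x, x', rfl⟩ := hb.mem_iff.1 hv
    refine Submodule.mem_span_pair.2 ⟨x * ↑u⁻¹, x' - x * ↑u⁻¹ * y, ?_⟩
    linear_combination (norm := module) x • u.inv_mul • e₀

theorem smul_add_smul_mem_smul_iff (hb : IsBasisPair T e₀ e₁) {x y : O} :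
    x • e₀ + y • e₁ ∈ ϖ • T ↔ ϖ ∣ x ∧ ϖ ∣ y := by
  rw [Submodule.mem_smul_pointwise_iff_exists]
  constructor
  · rintro ⟨w, hw, hwv⟩
    obtain ⟨x', y', rfl⟩ := hb.mem_iff.1 hw
    have h : (ϖ * x' - x) • e₀ + (ϖ * y' - y) • e₁ = 0 := by
      rw [← sub_eq_zero] at hwv
      rw [← hwv]
      module
    obtain ⟨hx, hy⟩ := hb.eq_zero_of_smul_add_smul_eq_zero h
    exact ⟨⟨x', (sub_eq_zero.1 hx).symm⟩, ⟨y', (sub_eq_zero.1 hy).symm⟩⟩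
  · rintro ⟨⟨x', rfl⟩, ⟨y', rfl⟩⟩
    exact ⟨x' • e₀ + y' • e₁, hb.mem_iff.2 ⟨x', y', rfl⟩, by module⟩

theorem left_notMem_smul (hϖ : Irreducible ϖ) (hb : IsBasisPair T e₀ e₁) : e₀ ∉ ϖ • T := by
  intro h
  rw [← one_smul O e₀, ← zero_add ((1 : O) • e₀), ← zero_smul O e₁, add_comm,
    hb.smul_add_smul_mem_smul_iff] at h
  exact hϖ.not_isUnit (isUnit_of_dvd_one h.1)

theorem left_notMem_span_add_sup (hϖ : Irreducible ϖ) (hb : IsBasisPair T e₀ e₁) :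
    e₀ ∉ Submodule.span O {e₀ + e₁} ⊔ ϖ • T := by
  intro h
  obtain ⟨_, hy, w, hw, hw'⟩ := Submodule.mem_sup.1 h
  obtain ⟨s, rfl⟩ := Submodule.mem_span_singleton.1 hy
  rw [show w = (1 - s) • e₀ + (-s) • e₁ by rw [eq_sub_of_add_eq' hw']; module,
    hb.smul_add_smul_mem_smul_iff] at hw
  exact hϖ.not_isUnit (isUnit_of_dvd_one (by simpa using dvd_sub hw.1 hw.2))

theorem smul_lt_span_add_sup (hϖ : Irreducible ϖ) (hb : IsBasisPair T e₀ e₁) :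
    ϖ • T < Submodule.span O {e₀ + e₁} ⊔ ϖ • T := by
  refine lt_of_le_of_ne le_sup_right fun h => ?_
  have : e₀ + e₁ ∈ ϖ • T := h ▸ Submodule.mem_sup_left (Submodule.mem_span_singleton_self _)
  rw [← one_smul O e₀, ← one_smul O e₁, hb.smul_add_smul_mem_smul_iff] at this
  exact hϖ.not_isUnit (isUnit_of_dvd_one this.1)

theorem span_add_sup_lt (hϖ : Irreducible ϖ) (hb : IsBasisPair T e₀ e₁) :
    Submodule.span O {e₀ + e₁} ⊔ ϖ • T < T :=
  lt_of_le_of_ne (sup_le (Submodule.span_le.2 (Set.singleton_subset_iff.2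
    (T.add_mem hb.left_mem hb.right_mem))) (Submodule.smul_le_self_of_tower ϖ T))
    fun h => hb.left_notMem_span_add_sup hϖ (h.ge hb.left_mem)

end IsBasisPair

section Endomorphism

variable {T : Submodule O V} {a b : V} {f : V →ₗ[O] V}

theorem Set.MapsTo.smul_submodule (hf : Set.MapsTo f T T) (ϖ : O) :
    Set.MapsTo f (ϖ • T) (ϖ • T) := by
  intro v hv
  obtain ⟨w, hw, rfl⟩ := (Submodule.mem_smul_pointwise_iff_exists _ _ _).1 hv
  rw [map_smul]
  exact Submodule.smul_mem_pointwise_smul _ ϖ T (hf hw)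

theorem Set.MapsTo.span_add_sup_smul (hT : Set.MapsTo f T T) (hbT : b ∈ T) {χ χ' : O}
    (hfa : f a - χ • a ∈ ϖ • T) (hfb : f b - χ' • b ∈ ϖ • T) (hχ : ϖ ∣ χ - χ') :
    Set.MapsTo f (Submodule.span O {a + b} ⊔ ϖ • T : Submodule O V)
      (Submodule.span O {a + b} ⊔ ϖ • T : Submodule O V) := by
  have hab : f (a + b) ∈ Submodule.span O {a + b} ⊔ ϖ • T := by
    obtain ⟨d, hd⟩ := hχ
    have key : f (a + b) = χ • (a + b) + ((f a - χ • a) + (f b - χ' • b) - ϖ • d • b) := by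
      rw [map_add, smul_smul, ← hd]
      module
    rw [key]
    exact Submodule.add_mem_sup (Submodule.mem_span_singleton.2 ⟨χ, rfl⟩)
      (sub_mem (add_mem hfa hfb) (Submodule.smul_mem_pointwise_smul _ _ _ (T.smul_mem d hbT)))
  intro v hv
  obtain ⟨_, hy, w, hw, rfl⟩ := Submodule.mem_sup.1 hv
  obtain ⟨s, rfl⟩ := Submodule.mem_span_singleton.1 hy
  rw [map_add, map_smul]
  exact add_mem (Submodule.smul_mem _ s hab) (Submodule.mem_sup_right (hT.smul_submodule ϖ hw))

end Endomorphism

variable [IsDomain O] [IsDiscreteValuationRing O]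

theorem Irreducible.isUnit_or_dvd (hϖ : Irreducible ϖ) (a : O) : IsUnit a ∨ ϖ ∣ a := by
  rw [← Ideal.mem_span_singleton, ← hϖ.maximalIdeal_eq, IsLocalRing.mem_maximalIdeal,
    mem_nonunits_iff]
  exact em _

namespace IsBasisPair

variable {T A B C : Submodule O V} {e₀ e₁ a b c v : V}

theorem exists_of_notMem_smul (hϖ : Irreducible ϖ) (hb : IsBasisPair T e₀ e₁) (ha : a ∈ T)
    (ha' : a ∉ ϖ • T) : ∃ e, IsBasisPair T a e := by
  obtain ⟨x, y, rfl⟩ := hb.mem_iff.1 ha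
  rcases hϖ.isUnit_or_dvd x with ⟨u, rfl⟩ | hx
  · exact ⟨e₁, hb.unit_smul_add u y⟩
  rcases hϖ.isUnit_or_dvd y with ⟨u, rfl⟩ | hy
  · exact ⟨e₀, add_comm (x • e₀) _ ▸ hb.swap.unit_smul_add u x⟩
  exact absurd (hb.smul_add_smul_mem_smul_iff.2 ⟨hx, hy⟩) ha'

theorem exists_sub_smul_mem_smul (hϖ : Irreducible ϖ) (hb : IsBasisPair T e₀ e₁) (hAT : A < T)
    (ha : a ∈ A) (ha' : a ∉ ϖ • T) (hv : v ∈ A) : ∃ s : O, v - s • a ∈ ϖ • T := by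
  obtain ⟨e, he⟩ := hb.exists_of_notMem_smul hϖ (hAT.le ha) ha'
  obtain ⟨s, t, rfl⟩ := he.mem_iff.1 (hAT.le hv)
  refine ⟨s, ?_⟩
  rcases hϖ.isUnit_or_dvd t with ⟨t, rfl⟩ | ⟨t, rfl⟩
  · have heA : e ∈ A := by
      have := A.smul_mem (↑t⁻¹ : O) (A.sub_mem hv (A.smul_mem s ha))
      rwa [add_sub_cancel_left, smul_smul, Units.inv_mul, one_smul] at this
    refine absurd (he.2 ▸ Submodule.span_le.2 ?_) hAT.not_ge
    rw [Set.insert_subset_iff, Set.singleton_subset_iff]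
    exact ⟨ha, heA⟩
  · rw [add_sub_cancel_left, mul_smul]
    exact Submodule.smul_mem_pointwise_smul _ _ _ (T.smul_mem _ he.right_mem)

theorem le_of_mem_of_mem (hϖ : Irreducible ϖ) (hb : IsBasisPair T e₀ e₁) (hAT : A < T)
    (hB : ϖ • T ≤ B) (hcA : c ∈ A) (hcB : c ∈ B) (hc : c ∉ ϖ • T) : A ≤ B := by
  intro v hv
  obtain ⟨s, hs⟩ := hb.exists_sub_smul_mem_smul hϖ hAT hcA hc hv
  simpa using B.add_mem (hB hs) (B.smul_mem s hcB)

theorem eq_of_mem_of_mem (hϖ : Irreducible ϖ) (hb : IsBasisPair T e₀ e₁)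
    (hA : ϖ • T ≤ A) (hAT : A < T) (hB : ϖ • T ≤ B) (hBT : B < T)
    (hcA : c ∈ A) (hcB : c ∈ B) (hc : c ∉ ϖ • T) : A = B :=
  le_antisymm (hb.le_of_mem_of_mem hϖ hAT hB hcA hcB hc)
    (hb.le_of_mem_of_mem hϖ hBT hA hcB hcA hc)

theorem exists_of_ne (hϖ : Irreducible ϖ) (hb : IsBasisPair T e₀ e₁)
    (hA : ϖ • T < A) (hAT : A < T) (hB : ϖ • T < B) (hBT : B < T) (hAB : A ≠ B) :
    ∃ a ∈ A, ∃ b ∈ B, IsBasisPair T a b := by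
  obtain ⟨a, haA, ha⟩ := SetLike.exists_of_lt hA
  obtain ⟨b, hbB, hb'⟩ := SetLike.exists_of_lt hB
  obtain ⟨e, he⟩ := hb.exists_of_notMem_smul hϖ (hAT.le haA) ha
  obtain ⟨p, q, rfl⟩ := he.mem_iff.1 (hBT.le hbB)
  rcases hϖ.isUnit_or_dvd q with ⟨q, rfl⟩ | ⟨q, rfl⟩
  · exact ⟨a, haA, _, hbB, add_comm (q • e) (p • a) ▸ he.swap.unit_smul_add q p |>.swap⟩
  · refine absurd (hb.eq_of_mem_of_mem hϖ hA.le hAT hB.le hBT ?_ hbB hb') hAB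
    rw [mul_smul]
    exact A.add_mem (A.smul_mem p haA)
      (hA.le (Submodule.smul_mem_pointwise_smul _ _ _ (T.smul_mem _ he.right_mem)))

theorem inf_le_smul_and_le_sup (hϖ : Irreducible ϖ) (hb : IsBasisPair T e₀ e₁)
    (hA : ϖ • T < A) (hAT : A < T) (hB : ϖ • T < B) (hBT : B < T) (hAB : A ≠ B) :
    A ⊓ B ≤ ϖ • T ∧ T ≤ A ⊔ B := by
  obtain ⟨a, haA, b, hbB, hab⟩ := hb.exists_of_ne hϖ hA hAT hB hBT hAB
  refine ⟨fun v hv => ?_, fun v hv => ?_⟩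
  · obtain ⟨p, q, rfl⟩ := hab.mem_iff.1 (hAT.le hv.1)
    obtain ⟨s, hs⟩ := hab.exists_sub_smul_mem_smul hϖ hAT haA (hab.left_notMem_smul hϖ) hv.1
    obtain ⟨t, ht⟩ := hab.swap.exists_sub_smul_mem_smul hϖ hBT hbB
      (hab.swap.left_notMem_smul hϖ) hv.2
    rw [show p • a + q • b - s • a = (p - s) • a + q • b by module,
      hab.smul_add_smul_mem_smul_iff] at hs
    rw [show p • a + q • b - t • b = p • a + (q - t) • b by module,
      hab.smul_add_smul_mem_smul_iff] at ht
    exact hab.smul_add_smul_mem_smul_iff.2 ⟨ht.1, hs.2⟩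
  · obtain ⟨p, q, rfl⟩ := hab.mem_iff.1 hv
    exact Submodule.add_mem_sup (A.smul_mem p haA) (B.smul_mem q hbB)

variable {f : V →ₗ[O] V}

theorem exists_eigenvalue (hϖ : Irreducible ϖ) (hb : IsBasisPair T e₀ e₁)
    (hT : Set.MapsTo f T T) (hA : ϖ • T < A) (hAT : A < T) (hfA : Set.MapsTo f A A) :
    ∃ χ : O, ∀ v ∈ A, f v - χ • v ∈ ϖ • T := by
  obtain ⟨a, haA, ha⟩ := SetLike.exists_of_lt hA
  obtain ⟨χ, hχ⟩ := hb.exists_sub_smul_mem_smul hϖ hAT haA ha (hfA haA)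
  refine ⟨χ, fun v hv => ?_⟩
  obtain ⟨σ, hσ⟩ := hb.exists_sub_smul_mem_smul hϖ hAT haA ha hv
  have key : f v - χ • v = f (v - σ • a) + σ • (f a - χ • a) - χ • (v - σ • a) := by
    simp only [map_sub, map_smul]
    module
  rw [key]
  exact sub_mem (add_mem (hT.smul_submodule ϖ hσ) (Submodule.smul_mem _ σ hχ))
    (Submodule.smul_mem _ χ hσ)

theorem eq_or_eq_of_mapsTo (hϖ : Irreducible ϖ) (hab : IsBasisPair T a b)
    (hA : ϖ • T ≤ A) (hAT : A < T) (haA : a ∈ A) (hB : ϖ • T ≤ B) (hBT : B < T) (hbB : b ∈ B)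
    (hC : ϖ • T < C) (hCT : C < T) (hfC : Set.MapsTo f C C) {χ χ' : O}
    (hfa : f a - χ • a ∈ ϖ • T) (hfb : f b - χ' • b ∈ ϖ • T) (hχ : ¬ ϖ ∣ χ - χ') :
    C = A ∨ C = B := by
  obtain ⟨c, hcC, hc⟩ := SetLike.exists_of_lt hC
  obtain ⟨p, q, rfl⟩ := hab.mem_iff.1 (hCT.le hcC)
  by_cases hq : ϖ ∣ q
  · refine .inl (hab.eq_of_mem_of_mem hϖ hC.le hCT hA hAT hcC ?_ hc)
    obtain ⟨q, rfl⟩ := hq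
    rw [mul_smul]
    exact A.add_mem (A.smul_mem p haA)
      (hA (Submodule.smul_mem_pointwise_smul _ _ _ (T.smul_mem _ hab.right_mem)))
  by_cases hp : ϖ ∣ p
  · refine .inr (hab.eq_of_mem_of_mem hϖ hC.le hCT hB hBT hcC ?_ hc)
    obtain ⟨p, rfl⟩ := hp
    rw [mul_smul]
    exact B.add_mem (hB (Submodule.smul_mem_pointwise_smul _ _ _ (T.smul_mem _ hab.left_mem)))
      (B.smul_mem q hbB)
  -- now `p, q` are units, and `f c ≡ r • c` forces `χ ≡ r ≡ χ'` modulo `ϖ`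
  obtain ⟨r, hr⟩ := hab.exists_sub_smul_mem_smul hϖ hCT hcC hc (hfC hcC)
  have key : (p * (χ - r)) • a + (q * (χ' - r)) • b =
      (f (p • a + q • b) - r • (p • a + q • b)) - p • (f a - χ • a) - q • (f b - χ' • b) := by
    simp only [map_add, map_smul]
    module
  have hmem := key ▸ sub_mem (sub_mem hr (Submodule.smul_mem _ p hfa)) (Submodule.smul_mem _ q hfb)
  obtain ⟨h₁, h₂⟩ := hab.smul_add_smul_mem_smul_iff.1 hmem
  have h₁ := (hϖ.prime.dvd_or_dvd h₁).resolve_left hp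
  have h₂ := (hϖ.prime.dvd_or_dvd h₂).resolve_left hq
  exact (hχ (by simpa using dvd_sub h₁ h₂)).elim

end IsBasisPair

end Lines

section Rigidity

variable {O K V : Type*} [CommRing O] [Field K] [Algebra O K] [AddCommGroup V] [Module K V]
  [Module O V] [IsScalarTower O K V] {ϖ : O} {T A B : Submodule O V}

theorem Submodule.units_smul_eq_smul {c : Kˣ} {o : O} (h : algebraMap O K o = c)
    (N : Submodule O V) : c • N = o • N := by
  ext v
  simp only [Submodule.mem_smul_pointwise_iff_exists, Units.smul_def, ← h, algebraMap_smul]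

variable [IsFractionRing O K]

theorem exists_units_smul_eq_smul (hϖ : ϖ ≠ 0) : ∃ c : Kˣ, ∀ N : Submodule O V, c • N = ϖ • N :=
  ⟨Units.mk0 _ ((map_ne_zero_iff _ (IsFractionRing.injective O K)).2 hϖ),
    Submodule.units_smul_eq_smul rfl⟩

variable [IsDomain O] [IsDiscreteValuationRing O]

theorem eq_of_eq_smul (hϖ : Irreducible ϖ) (hB : ϖ • T < B) (hAT : A ≤ T) {o : O}
    (h : B = o • A) : A = B := by
  rcases hϖ.isUnit_or_dvd o with ⟨u, rfl⟩ | ⟨o, rfl⟩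
  · rw [h, Submodule.unit_smul_eq]
  · refine absurd ?_ hB.not_ge
    rw [h, mul_smul]
    exact smul_le_smul_left ϖ ((Submodule.smul_le_self_of_tower o A).trans hAT)

/-- Either `c` or `c⁻¹` lies in `O`; a non-unit of `O` would push one lattice into `ϖ • T`. -/
theorem eq_of_eq_units_smul (hϖ : Irreducible ϖ) (hA : ϖ • T < A) (hAT : A ≤ T)
    (hB : ϖ • T < B) (hBT : B ≤ T) {c : Kˣ} (h : B = c • A) : A = B := by
  rcases ValuationRing.isInteger_or_isInteger O (c : K) with ⟨o, ho⟩ | ⟨o, ho⟩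
  · exact eq_of_eq_smul hϖ hB hAT (h.trans (Submodule.units_smul_eq_smul ho A))
  · refine (eq_of_eq_smul hϖ hA hBT (o := o) ?_).symm
    rw [← Submodule.units_smul_eq_smul (c := c⁻¹) (by simpa using ho), h, inv_smul_smul]

end Rigidity

section Tree

variable {O K : Type*} [CommRing O] [Field K] [Algebra O K] {G : Type*} [Group G] {ϖ : O}

theorem BTLat.isLattice (T : BTLat O K) : T.1.IsLattice K := ⟨T.2.1, T.2.2⟩

instance : SMul Kˣ (BTLat O K) where
  smul c T :=
    have := T.isLattice
    ⟨c • T.1, Submodule.IsLattice.fg, Submodule.IsLattice.span_eq_top⟩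

theorem BTLat.val_smul (c : Kˣ) (T : BTLat O K) : (c • T).1 = c • T.1 := rfl

theorem btcls_eq_iff {T T' : BTLat O K} : BTcls T = BTcls T' ↔ ∃ c : Kˣ, T'.1 = c • T.1 := by
  refine ⟨fun h => ?_, fun h => Quot.sound h⟩
  have heqv : Equivalence (fun T T' : BTLat O K => ∃ c : Kˣ, T'.1 = c • T.1) :=
    ⟨fun T => ⟨1, (one_smul _ _).symm⟩, fun ⟨c, h⟩ => ⟨c⁻¹, by rw [h, inv_smul_smul]⟩,
      fun ⟨c, h⟩ ⟨d, h'⟩ => ⟨d * c, by rw [h', h, mul_smul]⟩⟩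
  exact heqv.eqvGen_iff.1 (Quot.eqvGen_exact h)

theorem btcls_smul (c : Kˣ) (T : BTLat O K) : BTcls (c • T) = BTcls T :=
  (btcls_eq_iff.2 ⟨c, rfl⟩).symm

theorem BTStable.units_smul {ρ : G →* GL (Fin 2) K} {N : Submodule O (Fin 2 → K)}
    (hN : BTStable ρ N) (c : Kˣ) : BTStable ρ (c • N) := by
  intro g v hv
  obtain ⟨w, hw, rfl⟩ := (Submodule.mem_smul_pointwise_iff_exists _ _ _).1 hv
  rw [Units.smul_def, Matrix.mulVec_smul]
  exact Submodule.smul_mem_pointwise_smul _ c N (hN g w hw)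

theorem btcls_mem_fixedVtx_iff {ρ : G →* GL (Fin 2) K} {T : BTLat O K} :
    BTcls T ∈ fixedVtx ρ ↔ BTStable ρ T.1 := by
  refine ⟨fun ⟨S, hS, hSρ⟩ => ?_, fun h => ⟨T, rfl, h⟩⟩
  obtain ⟨c, hc⟩ := btcls_eq_iff.1 hS
  exact hc ▸ hSρ.units_smul c

def repLin (O : Type*) [CommRing O] [Algebra O K] (ρ : G →* GL (Fin 2) K) (g : G) :
    (Fin 2 → K) →ₗ[O] Fin 2 → K :=
  (Matrix.mulVecLin (ρ g : Matrix (Fin 2) (Fin 2) K)).restrictScalars O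

theorem btStable_iff_mapsTo {ρ : G →* GL (Fin 2) K} {A : Submodule O (Fin 2 → K)} :
    BTStable ρ A ↔ ∀ g, Set.MapsTo (repLin O ρ g) A A :=
  Iff.rfl

/-- The `ρ`-stable lines of `T / ϖT`, encoded as submodules strictly between `ϖ • T` and `T`. -/
def stableLines (ϖ : O) (ρ : G →* GL (Fin 2) K) (T : Submodule O (Fin 2 → K)) :
    Set (Submodule O (Fin 2 → K)) :=
  {A | BTStable ρ A ∧ ϖ • T < A ∧ A < T}

section

variable [IsFractionRing O K]

theorem btTree_adj_iff (hϖ : ϖ ≠ 0) {x y : BTVtx O K} :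
    (BTtree O K ϖ).Adj x y ↔ x ≠ y ∧ ∃ T T' : BTLat O K,
      BTcls T = x ∧ BTcls T' = y ∧ ϖ • T.1 ≤ T'.1 ∧ T'.1 ≤ T.1 := by
  refine ⟨fun ⟨hxy, h⟩ => ⟨hxy, ?_⟩, fun ⟨hxy, h⟩ => ⟨hxy, .inl h⟩⟩
  obtain h | ⟨T, T', hT, hT', h₁, h₂⟩ := h
  · exact h
  obtain ⟨c, hc⟩ := exists_units_smul_eq_smul (K := K) (V := Fin 2 → K) hϖ
  refine ⟨T', c • T, hT', (btcls_smul c T).trans hT, ?_, ?_⟩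
  · rw [BTLat.val_smul, hc]
    exact smul_le_smul_left ϖ h₂
  · rwa [BTLat.val_smul, hc]

variable [IsDomain O] [IsDiscreteValuationRing O]

def BTLat.ofLE (hϖ : ϖ ≠ 0) (T : BTLat O K) (A : Submodule O (Fin 2 → K)) (h₁ : ϖ • T.1 ≤ A)
    (h₂ : A ≤ T.1) : BTLat O K :=
  have := T.isLattice
  have : IsNoetherian O T.1 := isNoetherian_of_isNoetherianRing_of_finite O T.1
  have hA : A.IsLattice K := by
    obtain ⟨c, hc⟩ := exists_units_smul_eq_smul (K := K) (V := Fin 2 → K) hϖ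
    exact Submodule.IsLattice.of_le_of_isLattice_of_fg K (M := c • T.1) (hc T.1 ▸ h₁)
      (Submodule.FG.of_le_of_isNoetherian h₂)
  ⟨A, hA.fg, hA.span_eq_top⟩

theorem BTLat.exists_isBasisPair (T : BTLat O K) : ∃ e₀ e₁, IsBasisPair T.1 e₀ e₁ := by
  have := T.isLattice
  let b := Module.finBasisOfFinrankEq O T.1
    (by simpa using Submodule.IsLattice.finrank_of_pi K T.1 : Module.finrank O T.1 = 2)
  refine ⟨b 0, b 1, ?_, ?_⟩
  · have hli : LinearIndependent O ![b 0, b 1] := by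
      convert b.linearIndependent
      ext i : 1
      fin_cases i <;> rfl
    refine LinearIndependent.pair_iff.2 fun s t h => LinearIndependent.pair_iff.1 hli s t ?_
    exact Subtype.ext (by simpa using h)
  · refine le_antisymm (Submodule.span_le.2 ?_) fun v hv => Submodule.mem_span_pair.2 ?_
    · rintro _ (rfl | rfl) <;> exact Subtype.prop _
    · have := congrArg Subtype.val (b.sum_repr ⟨v, hv⟩)
      rw [Fin.sum_univ_two] at this
      exact ⟨_, _, by simpa using this⟩

theorem neighbors_eq_image (hϖ : Irreducible ϖ) (ρ : G →* GL (Fin 2) K) (T : BTLat O K) :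
    {y | y ∈ fixedVtx ρ ∧ (BTtree O K ϖ).Adj (BTcls T) y} =
      BTcls '' (Subtype.val ⁻¹' stableLines ϖ ρ T.1) := by
  ext y
  constructor
  · rintro ⟨hy, hadj⟩
    obtain ⟨hne, T₀, T₀', hT₀, rfl, h₁, h₂⟩ := (btTree_adj_iff hϖ.ne_zero).1 hadj
    obtain ⟨c, hc⟩ := btcls_eq_iff.1 hT₀
    obtain ⟨d, hd⟩ := exists_units_smul_eq_smul (K := K) (V := Fin 2 → K) hϖ.ne_zero
    have hcls := btcls_smul c T₀'
    refine ⟨c • T₀', ⟨btcls_mem_fixedVtx_iff.1 (hcls ▸ hy), lt_of_le_of_ne ?_ fun h => ?_,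
      lt_of_le_of_ne ?_ fun h => ?_⟩, hcls⟩
    · rw [hc, BTLat.val_smul, ← hd, smul_smul, mul_comm, mul_smul, hd]
      exact Submodule.map_mono h₁
    · exact hne ((btcls_eq_iff.2 ⟨d, h.symm.trans (hd T.1).symm⟩).trans hcls)
    · rw [hc]
      exact Submodule.map_mono h₂
    · exact hne ((congrArg BTcls (Subtype.ext h)).symm.trans hcls)
  · rintro ⟨A, ⟨hA, h₁, h₂⟩, rfl⟩
    refine ⟨btcls_mem_fixedVtx_iff.2 hA,
      (btTree_adj_iff hϖ.ne_zero).2 ⟨fun h => ?_, T, A, rfl, rfl, h₁.le, h₂.le⟩⟩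
    obtain ⟨c, hc⟩ := btcls_eq_iff.1 h
    exact h₂.ne' (eq_of_eq_units_smul hϖ (h₁.trans h₂) le_rfl h₁ h₂.le hc)

theorem encard_neighbors (hϖ : Irreducible ϖ) (ρ : G →* GL (Fin 2) K) (T : BTLat O K) :
    {y | y ∈ fixedVtx ρ ∧ (BTtree O K ϖ).Adj (BTcls T) y}.encard =
      (stableLines ϖ ρ T.1).encard := by
  have hinj : Set.InjOn BTcls (Subtype.val ⁻¹' stableLines ϖ ρ T.1) := by
    rintro A ⟨-, hA, hAT⟩ B ⟨-, hB, hBT⟩ h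
    obtain ⟨c, hc⟩ := btcls_eq_iff.1 h
    exact Subtype.ext (eq_of_eq_units_smul hϖ hA hAT.le hB hBT.le hc)
  rw [neighbors_eq_image hϖ, hinj.encard_image]
  exact Set.encard_preimage_of_injective_subset_range Subtype.val_injective
    fun A ⟨_, hA, hAT⟩ => ⟨BTLat.ofLE hϖ.ne_zero T A hA.le hAT.le, rfl⟩

end

section

variable [IsDomain O] [IsDiscreteValuationRing O] {ρ : G →* GL (Fin 2) K}
  {T : Submodule O (Fin 2 → K)} {e₀ e₁ : Fin 2 → K}

theorem encard_stableLines_eq_one_iff (hϖ : Irreducible ϖ) (hb : IsBasisPair T e₀ e₁) :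
    (stableLines ϖ ρ T).encard = 1 ↔
      (∃ T' : Submodule O (Fin 2 → K), BTStable ρ T' ∧ ϖ • T < T' ∧ T' < T) ∧
        ¬ ∃ T' T'' : Submodule O (Fin 2 → K), BTStable ρ T' ∧ BTStable ρ T'' ∧
          ϖ • T < T' ∧ T' < T ∧ ϖ • T < T'' ∧ T'' < T ∧ T' ⊓ T'' ≤ ϖ • T ∧ T ≤ T' ⊔ T'' := by
  rw [Set.encard_eq_one, Set.exists_eq_singleton_iff_nonempty_subsingleton]
  refine and_congr Iff.rfl ⟨fun hL ⟨P, Q, hP, hQ, hP₁, hP₂, hQ₁, hQ₂, hPQ, _⟩ => ?_,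
    fun h A hA B hB => ?_⟩
  · exact ne_of_lt_of_inf_le hP₁ hPQ (hL ⟨hP, hP₁, hP₂⟩ ⟨hQ, hQ₁, hQ₂⟩)
  · by_contra hAB
    exact h ⟨A, B, hA.1, hB.1, hA.2.1, hA.2.2, hB.2.1, hB.2.2,
      hb.inf_le_smul_and_le_sup hϖ hA.2.1 hA.2.2 hB.2.1 hB.2.2 hAB⟩

theorem encard_stableLines_eq_two_iff (hϖ : Irreducible ϖ) (hb : IsBasisPair T e₀ e₁)
    (hT : BTStable ρ T) :
    (stableLines ϖ ρ T).encard = 2 ↔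
      ∃ T' T'' : Submodule O (Fin 2 → K), BTStable ρ T' ∧ BTStable ρ T'' ∧
        ϖ • T < T' ∧ T' < T ∧ ϖ • T < T'' ∧ T'' < T ∧ T' ⊓ T'' ≤ ϖ • T ∧ T ≤ T' ⊔ T'' ∧
        ∃ χ χ' : G → O,
          (∀ g : G, ∀ v ∈ T', Matrix.mulVec (ρ g : Matrix (Fin 2) (Fin 2) K) v - χ g • v ∈
            ϖ • T) ∧
          (∀ g : G, ∀ v ∈ T'', Matrix.mulVec (ρ g : Matrix (Fin 2) (Fin 2) K) v - χ' g • v ∈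
            ϖ • T) ∧
          ∃ g : G, χ g - χ' g ∉ Ideal.span {ϖ} := by
  have hTf := btStable_iff_mapsTo.1 hT
  rw [Set.encard_eq_two]
  constructor
  · rintro ⟨A, B, hAB, hL⟩
    obtain ⟨hA, hA₁, hA₂⟩ : A ∈ stableLines ϖ ρ T := hL ▸ Set.mem_insert A {B}
    obtain ⟨hB, hB₁, hB₂⟩ : B ∈ stableLines ϖ ρ T := hL ▸ Set.mem_insert_of_mem A rfl
    choose χ hχ using fun g => hb.exists_eigenvalue hϖ (hTf g) hA₁ hA₂ (hA g)
    choose χ' hχ' using fun g => hb.exists_eigenvalue hϖ (hTf g) hB₁ hB₂ (hB g)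
    obtain ⟨hinf, hsup⟩ := hb.inf_le_smul_and_le_sup hϖ hA₁ hA₂ hB₁ hB₂ hAB
    refine ⟨A, B, hA, hB, hA₁, hA₂, hB₁, hB₂, hinf, hsup, χ, χ', hχ, hχ', ?_⟩
    by_contra! hχχ'
    -- all of `G` acts on `T / ϖT` by scalars, so the line of `a + b` is a third stable line
    obtain ⟨a, haA, b, hbB, hab⟩ := hb.exists_of_ne hϖ hA₁ hA₂ hB₁ hB₂ hAB
    have hC : Submodule.span O {a + b} ⊔ ϖ • T ∈ stableLines ϖ ρ T :=
      ⟨btStable_iff_mapsTo.2 fun g => (hTf g).span_add_sup_smul hab.right_mem (hχ g a haA)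
        (hχ' g b hbB) (Ideal.mem_span_singleton.1 (hχχ' g)),
        hab.smul_lt_span_add_sup hϖ, hab.span_add_sup_lt hϖ⟩
    rcases hL ▸ hC with hCA | hCB
    · exact hab.left_notMem_span_add_sup hϖ (hCA ▸ haA)
    · exact hab.swap.left_notMem_span_add_sup hϖ (add_comm a b ▸ hCB ▸ hbB)
  · rintro ⟨P, Q, hP, hQ, hP₁, hP₂, hQ₁, hQ₂, hPQ, -, χ, χ', hχ, hχ', g, hg⟩
    have hne := ne_of_lt_of_inf_le hP₁ hPQ
    obtain ⟨a, haP, b, hbQ, hab⟩ := hb.exists_of_ne hϖ hP₁ hP₂ hQ₁ hQ₂ hne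
    refine ⟨P, Q, hne, Set.Subset.antisymm (fun C ⟨hC, hC₁, hC₂⟩ => ?_) ?_⟩
    · exact hab.eq_or_eq_of_mapsTo hϖ hP₁.le hP₂ haP hQ₁.le hQ₂ hbQ hC₁ hC₂ (btStable_iff_mapsTo.1 hC g)
        (hχ g a haP) (hχ' g b hbQ) (mt Ideal.mem_span_singleton.2 hg)
    · rintro C (rfl | rfl)
      exacts [⟨hP, hP₁, hP₂⟩, ⟨hQ, hQ₁, hQ₂⟩]

end

end Tree

/-- Let `x = [T] ∈ X(ρ)`.  Then `x` has no neighbor in `X(ρ)` iff the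
reduction `ρ̄_T` (the action on `T/ϖT`) is irreducible; exactly one neighbor iff `ρ̄_T` is
reducible but indecomposable; exactly two neighbors iff `ρ̄_T` decomposes as a direct sum
of two distinct characters.  (Stable lines of `T/ϖT` are encoded as stable submodules
`ϖT ⊊ T' ⊊ T`.) -/
theorem neighbors_of_fixed_vertex
    (ϖ : O) (hϖ : Irreducible ϖ)
    (ρ : G →* GL (Fin 2) K)
    (T : BTLat O K) (hT : BTStable ρ T.1) :
    -- no neighbor in `X(ρ)` ↔ `ρ̄_T` irreducible
    ((¬ ∃ y ∈ fixedVtx ρ, (BTtree O K ϖ).Adj (BTcls T) y) ↔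
      ¬ ∃ T' : Submodule O (Fin 2 → K), BTStable ρ T' ∧ ϖ • T.1 < T' ∧ T' < T.1) ∧
    -- exactly one neighbor ↔ `ρ̄_T` reducible but indecomposable
    ((∃ y ∈ fixedVtx ρ, (BTtree O K ϖ).Adj (BTcls T) y ∧
        ∀ z ∈ fixedVtx ρ, (BTtree O K ϖ).Adj (BTcls T) z → z = y) ↔
      ((∃ T' : Submodule O (Fin 2 → K), BTStable ρ T' ∧ ϖ • T.1 < T' ∧ T' < T.1) ∧
        ¬ ∃ T' T'' : Submodule O (Fin 2 → K), BTStable ρ T' ∧ BTStable ρ T'' ∧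
          ϖ • T.1 < T' ∧ T' < T.1 ∧ ϖ • T.1 < T'' ∧ T'' < T.1 ∧
          T' ⊓ T'' ≤ ϖ • T.1 ∧ T.1 ≤ T' ⊔ T'')) ∧
    -- exactly two neighbors ↔ `ρ̄_T` is the direct sum of two distinct characters
    ((∃ y₁ ∈ fixedVtx ρ, ∃ y₂ ∈ fixedVtx ρ, y₁ ≠ y₂ ∧
        (BTtree O K ϖ).Adj (BTcls T) y₁ ∧ (BTtree O K ϖ).Adj (BTcls T) y₂ ∧
        ∀ z ∈ fixedVtx ρ, (BTtree O K ϖ).Adj (BTcls T) z → z = y₁ ∨ z = y₂) ↔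
      (∃ T' T'' : Submodule O (Fin 2 → K), BTStable ρ T' ∧ BTStable ρ T'' ∧
        ϖ • T.1 < T' ∧ T' < T.1 ∧ ϖ • T.1 < T'' ∧ T'' < T.1 ∧
        T' ⊓ T'' ≤ ϖ • T.1 ∧ T.1 ≤ T' ⊔ T'' ∧
        ∃ χ χ' : G → O,
          (∀ g : G, ∀ v ∈ T', Matrix.mulVec (ρ g : Matrix (Fin 2) (Fin 2) K) v - χ g • v ∈
            ϖ • T.1) ∧
          (∀ g : G, ∀ v ∈ T'', Matrix.mulVec (ρ g : Matrix (Fin 2) (Fin 2) K) v - χ' g • v ∈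
            ϖ • T.1) ∧
          ∃ g : G, χ g - χ' g ∉ Ideal.span {ϖ})) := by
  obtain ⟨e₀, e₁, hb⟩ := T.exists_isBasisPair
  have hN := encard_neighbors hϖ ρ T
  refine ⟨not_congr (Set.nonempty_iff_of_encard_eq hN), ?_, ?_⟩
  · rw [← encard_stableLines_eq_one_iff hϖ hb, ← hN, Set.encard_eq_one]
    simp only [Set.eq_singleton_iff_unique_mem, Set.mem_ofPred_eq, and_imp, and_assoc]
  · rw [← encard_stableLines_eq_two_iff hϖ hb hT, ← hN, Set.encard_eq_two]
    simp only [Set.Subset.antisymm_iff, Set.subset_pair_iff, Set.pair_subset_iff,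
      Set.mem_ofPred_eq, and_imp]
    grind

end
end

section
/- Let G be a group, ρ : G → GL_2(A) a representation over a commutative ring A, written ρ(g) = (a(g), b(g); c(g), d(g)), with a fixed element g_0 such that ρ(g_0) = diag(1, λ) with λ ∈ A^×. Let B be the module generated by the b(g) and I an ideal such that b(gh) ≡ a(g)b(h) + b(g)d(h) mod I and the reductions of a, d mod I are characters η̄_1, η̄_2, and let b̄ : G → B/IB be the reduction of b. Then for any g ∈ G, the commutator [g, g_0] satisfies b̄([g, g_0]) = ((λ−1)/λ) · η̄_2(g)^{-1} · b̄(g). -/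
/-- Let `ρ : G → GL₂(A)` be a representation over a commutative ring
`A`, written `ρ g = (a g, b g; c g, d g)`, with `ρ g₀ = diag(1, λ)` for a unit `λ`.
Let `I` be an ideal such that the reductions of `a` and `d` mod `I` are characters
`η₁, η₂` and all products `b(g)c(g')` lie in `I`.  Let `B` be the `A`-module generated by
the `b(g)` and `b̄ : G → B/IB` the reduction.  Then for every `g`, the commutator
`[g, g₀]` satisfies `b̄([g, g₀]) = ((λ−1)/λ) · η₂(g)⁻¹ · b̄(g)`. -/
theorem commutator_entry_formula
    (A : Type*) [CommRing A]
    (G : Type*) [Group G]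
    (ρ : G →* GL (Fin 2) A)
    (g₀ : G) (lam : Aˣ)
    (hdiag : (ρ g₀ : Matrix (Fin 2) (Fin 2) A) = Matrix.diagonal ![1, (lam : A)])
    (I : Ideal A)
    (η₁ η₂ : G →* (A ⧸ I)ˣ)
    (hη₁ : ∀ g : G, Ideal.Quotient.mk I ((ρ g : Matrix (Fin 2) (Fin 2) A) 0 0) = ↑(η₁ g))
    (hη₂ : ∀ g : G, Ideal.Quotient.mk I ((ρ g : Matrix (Fin 2) (Fin 2) A) 1 1) = ↑(η₂ g))
    (hbc : ∀ g g' : G,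
      (ρ g : Matrix (Fin 2) (Fin 2) A) 0 1 * (ρ g' : Matrix (Fin 2) (Fin 2) A) 1 0 ∈ I)
    (g : G) :
    -- work in `B/IB`, where `B` is the `A`-module generated by the entries `b(g)`
    (Submodule.Quotient.mk
        (⟨(ρ (g * g₀ * g⁻¹ * g₀⁻¹) : Matrix (Fin 2) (Fin 2) A) 0 1,
          Submodule.subset_span ⟨g * g₀ * g⁻¹ * g₀⁻¹, rfl⟩⟩ :
          (Submodule.span A {x : A | ∃ h : G, x = (ρ h : Matrix (Fin 2) (Fin 2) A) 0 1})) :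
      _ ⧸ (I • ⊤ : Submodule A
        (Submodule.span A {x : A | ∃ h : G, x = (ρ h : Matrix (Fin 2) (Fin 2) A) 0 1}))) =
    ((((Units.map (Ideal.Quotient.mk I).toMonoidHom lam : (A ⧸ I)ˣ) : A ⧸ I) - 1) *
        ↑((Units.map (Ideal.Quotient.mk I).toMonoidHom lam)⁻¹ : (A ⧸ I)ˣ) *
        ↑((η₂ g)⁻¹ : (A ⧸ I)ˣ)) •
      Submodule.Quotient.mk
        (⟨(ρ g : Matrix (Fin 2) (Fin 2) A) 0 1, Submodule.subset_span ⟨g, rfl⟩⟩ :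
          (Submodule.span A {x : A | ∃ h : G, x = (ρ h : Matrix (Fin 2) (Fin 2) A) 0 1})) := by
  -- matrix of ρ g₀⁻¹
  have h2 : ((ρ g₀⁻¹ : GL (Fin 2) A) : Matrix (Fin 2) (Fin 2) A) *
      ((ρ g₀ : GL (Fin 2) A) : Matrix (Fin 2) (Fin 2) A) = 1 := by
    rw [← Units.val_mul, ← map_mul]; simp
  have hD : ((ρ g₀ : GL (Fin 2) A) : Matrix (Fin 2) (Fin 2) A) *
      Matrix.diagonal ![1, ((lam⁻¹ : Aˣ) : A)] = 1 := by
    rw [hdiag]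
    ext i j
    fin_cases i <;> fin_cases j <;>
      simp [Matrix.mul_apply, Fin.sum_univ_two, Matrix.one_apply]
  have hMinv : ((ρ g₀⁻¹ : GL (Fin 2) A) : Matrix (Fin 2) (Fin 2) A)
      = Matrix.diagonal ![1, ((lam⁻¹ : Aˣ) : A)] := by
    have h3 := congrArg (fun m => ((ρ g₀⁻¹ : GL (Fin 2) A) : Matrix (Fin 2) (Fin 2) A) * m) hD
    simpa [← mul_assoc, h2] using h3.symm
  -- product decomposition
  have hform : ((ρ g : Matrix (Fin 2) (Fin 2) A))⁻¹ = (ρ g⁻¹ : Matrix (Fin 2) (Fin 2) A) := by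
    rw [map_inv]; exact (Matrix.coe_units_inv (ρ g)).symm
  have hmul : (ρ (g * g₀ * g⁻¹ * g₀⁻¹) : Matrix (Fin 2) (Fin 2) A)
      = (ρ g : Matrix (Fin 2) (Fin 2) A) * (ρ g₀ : Matrix (Fin 2) (Fin 2) A) *
        (ρ g⁻¹ : Matrix (Fin 2) (Fin 2) A) * (ρ g₀⁻¹ : Matrix (Fin 2) (Fin 2) A) := by
    simp [map_mul]
  have hgi : (ρ g : Matrix (Fin 2) (Fin 2) A) * (ρ g⁻¹ : Matrix (Fin 2) (Fin 2) A) = 1 := by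
    rw [← Units.val_mul, ← map_mul]; simp
  have h01 : (ρ g : Matrix (Fin 2) (Fin 2) A) 0 0 * (ρ g⁻¹ : Matrix (Fin 2) (Fin 2) A) 0 1 +
      (ρ g : Matrix (Fin 2) (Fin 2) A) 0 1 * (ρ g⁻¹ : Matrix (Fin 2) (Fin 2) A) 1 1 = 0 := by
    have := congrFun (congrFun hgi 0) 1
    simpa [Matrix.mul_apply, Fin.sum_univ_two] using this
  set c : A := ((lam : A) - 1) * ((lam⁻¹ : Aˣ) : A) * (ρ g⁻¹ : Matrix (Fin 2) (Fin 2) A) 1 1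
    with hc
  have hcomm : (ρ (g * g₀ * g⁻¹ * g₀⁻¹) : Matrix (Fin 2) (Fin 2) A) 0 1 =
      c * (ρ g : Matrix (Fin 2) (Fin 2) A) 0 1 := by
    rw [hmul, hMinv, hdiag]
    have hli : (lam : A) * ((lam⁻¹ : Aˣ) : A) = 1 := by
      rw [← Units.val_mul]; simp
    simp only [Matrix.mul_apply, Fin.sum_univ_two, hc]
    norm_num [Matrix.diagonal_apply]
    rw [hform]
    linear_combination ((lam⁻¹ : Aˣ) : A) * h01
  -- scalar identification
  have hscal : ((((Units.map (Ideal.Quotient.mk I).toMonoidHom lam : (A ⧸ I)ˣ) : A ⧸ I) - 1) *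
        ↑((Units.map (Ideal.Quotient.mk I).toMonoidHom lam)⁻¹ : (A ⧸ I)ˣ) *
        ↑((η₂ g)⁻¹ : (A ⧸ I)ˣ)) = Ideal.Quotient.mk I c := by
    have hd' : Ideal.Quotient.mk I ((ρ g⁻¹ : Matrix (Fin 2) (Fin 2) A) 1 1)
        = ((η₂ g)⁻¹ : (A ⧸ I)ˣ) := by
      rw [hη₂ g⁻¹, ← map_inv]
    simp only [hc, map_mul, map_sub, map_one, hd', Units.coe_map_inv, Units.coe_map,
      MonoidHom.coe_coe, RingHom.toMonoidHom_eq_coe]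
  rw [hscal]
  show _ = Submodule.Quotient.mk (c • _)
  congr 1
  ext
  simpa using hcomm
end

section
/- Let A be an integral domain, ρ : G → GL_2(Frac(A)) a representation with reducibility ideal I(ρ) ⊂ A (generated by b(g)c(g') in a suitable basis), and let η_1, η_2 : G → A^× be characters with a(g) ≡ η_1(g) and d(g) ≡ η_2(g) mod I(ρ) for all g. Then the ideal J generated by tr ρ(g) − η_1(g) − η_2(g) for all g ∈ G equals the ideal J' generated by a(g) − η_1(g) for all g ∈ G, using the identity tr ρ(g) − η_1(g) − η_2(g) = (a(g) − η_1(g)) + (a(g^{-1}) − η_1(g^{-1}))·(η_1η_2)(g) when det ρ = η_1η_2. -/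
open IsLocalRing

/-- (Setting of Lemma 3.7.)  Let `A` be a complete local Noetherian
domain (`char k ≠ 2`), `ρ : G → GL₂(Frac A)` a representation, diagonal at `g₀` with
residually distinct diagonal characters, whose diagonal entries `a(g), d(g)` lie in `A`
and satisfy `a ≡ η₁`, `d ≡ η₂` modulo the reducibility ideal `I(ρ)` (generated by the
products `b(g)c(g')`), where `η₁, η₂ : G → Aˣ` are characters with `det ρ = η₁η₂`.
Then the ideal `J` generated by `tr ρ(g) − η₁(g) − η₂(g)` equals the ideal `J'` generated
by `a(g) − η₁(g)` (via the identity
`tr ρ(g) − η₁(g) − η₂(g) = (a(g) − η₁(g)) + (a(g⁻¹) − η₁(g⁻¹))·(η₁η₂)(g)`). -/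
theorem trace_ideal_eq_diagonal_ideal
    (A : Type*) [CommRing A] [IsDomain A] [IsLocalRing A] [IsNoetherianRing A]
    [IsAdicComplete (maximalIdeal A) A]
    (hchar : ringChar (ResidueField A) ≠ 2)
    (K : Type*) [Field K] [Algebra A K] [IsFractionRing A K]
    (G : Type*) [Group G]
    (ρ : G →* GL (Fin 2) K)
    (aA dA : G → A)
    (haA : ∀ g : G, algebraMap A K (aA g) = (ρ g : Matrix (Fin 2) (Fin 2) K) 0 0)
    (hdA : ∀ g : G, algebraMap A K (dA g) = (ρ g : Matrix (Fin 2) (Fin 2) K) 1 1)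
    (η₁ η₂ : G →* Aˣ)
    (g₀ : G)
    (hdiag₁ : (ρ g₀ : Matrix (Fin 2) (Fin 2) K) 0 1 = 0)
    (hdiag₂ : (ρ g₀ : Matrix (Fin 2) (Fin 2) K) 1 0 = 0)
    (hg₀ : residue A ((η₁ g₀ : A)) ≠ residue A ((η₂ g₀ : A)))
    (Iρ : Ideal A) (hIρtop : Iρ ≠ ⊤)
    (hIρ : Iρ = Ideal.span {x : A | ∃ g g' : G,
      algebraMap A K x = (ρ g : Matrix (Fin 2) (Fin 2) K) 0 1 *
        (ρ g' : Matrix (Fin 2) (Fin 2) K) 1 0})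
    (ha : ∀ g : G, aA g - (η₁ g : A) ∈ Iρ)
    (hd : ∀ g : G, dA g - (η₂ g : A) ∈ Iρ)
    (hdet : ∀ g : G, Matrix.det (ρ g : Matrix (Fin 2) (Fin 2) K) =
      algebraMap A K ((η₁ g : A) * (η₂ g : A))) :
    Ideal.span {x : A | ∃ g : G, x = aA g + dA g - (η₁ g : A) - (η₂ g : A)} =
      Ideal.span {x : A | ∃ g : G, x = aA g - (η₁ g : A)} := by
  classical
  have inj : Function.Injective (algebraMap A K) := IsFractionRing.injective A K
  -- coercion of products of GL elements
  have hmul : ∀ g g' : G, ((ρ (g * g') : Matrix (Fin 2) (Fin 2) K))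
      = (ρ g : Matrix (Fin 2) (Fin 2) K) * (ρ g' : Matrix (Fin 2) (Fin 2) K) := by
    intro g g'; rw [map_mul]; rfl
  -- multiplicativity of the diagonal entries at g₀
  have haMul : ∀ g : G, aA (g₀ * g) = aA g₀ * aA g := by
    intro g
    apply inj
    rw [map_mul, haA, haA, haA, hmul, Matrix.mul_apply, Fin.sum_univ_two, hdiag₁]
    ring
  have hdMul : ∀ g : G, dA (g₀ * g) = dA g₀ * dA g := by
    intro g
    apply inj
    rw [map_mul, hdA, hdA, hdA, hmul, Matrix.mul_apply, Fin.sum_univ_two, hdiag₂]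
    ring
  -- the identity d(g) = η₁(g) η₂(g) a(g⁻¹)
  have hda : ∀ g : G, dA g = (η₁ g : A) * (η₂ g : A) * aA g⁻¹ := by
    intro g
    apply inj
    have hinv : (ρ g⁻¹ : Matrix (Fin 2) (Fin 2) K) = (ρ g : Matrix (Fin 2) (Fin 2) K)⁻¹ := by
      rw [map_inv]
      exact (Matrix.coe_units_inv (ρ g))
    have hu : IsUnit (ρ g : Matrix (Fin 2) (Fin 2) K).det := by
      have : IsUnit ((ρ g : GL (Fin 2) K) : Matrix (Fin 2) (Fin 2) K) := (ρ g).isUnit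
      exact (Matrix.isUnit_iff_isUnit_det _).mp this
    have h00 : ((ρ g : Matrix (Fin 2) (Fin 2) K)⁻¹) 0 0
        = Ring.inverse (ρ g : Matrix (Fin 2) (Fin 2) K).det
          * (ρ g : Matrix (Fin 2) (Fin 2) K) 1 1 := by
      rw [Matrix.inv_def, Matrix.adjugate_fin_two]
      simp [Matrix.smul_apply]
    rw [hdA, map_mul, map_mul, haA g⁻¹, hinv, h00, ← map_mul, ← hdet g, ← mul_assoc,
      Ring.mul_inverse_cancel _ hu, one_mul]
  -- residue computations
  have hIm : Iρ ≤ maximalIdeal A := le_maximalIdeal hIρtop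
  have unit_of_res : ∀ x : A, residue A x ≠ 0 → IsUnit x := by
    intro x hx
    by_contra h
    exact hx (Ideal.Quotient.eq_zero_iff_mem.mpr ((mem_maximalIdeal x).mpr h))
  have hres_s : residue A (aA g₀ - (η₁ g₀ : A)) = 0 :=
    Ideal.Quotient.eq_zero_iff_mem.mpr (hIm (ha g₀))
  have hres_t : residue A (dA g₀ - (η₂ g₀ : A)) = 0 :=
    Ideal.Quotient.eq_zero_iff_mem.mpr (hIm (hd g₀))
  have hηres : residue A ((η₂ g₀ : A) - (η₁ g₀ : A)) ≠ 0 := by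
    rw [map_sub, sub_ne_zero]
    exact fun h => hg₀ h.symm
  have h2 : (2 : ResidueField A) ≠ 0 := by
    intro h
    have hd2 : ringChar (ResidueField A) ∣ 2 := ringChar.dvd (by exact_mod_cast h)
    rcases (Nat.dvd_prime Nat.prime_two).mp hd2 with h1 | h1
    · exact CharP.ringChar_ne_one h1
    · exact hchar h1
  have hu1 : IsUnit (dA g₀ - aA g₀) := by
    apply unit_of_res
    have heq : dA g₀ - aA g₀ = (dA g₀ - (η₂ g₀ : A)) - (aA g₀ - (η₁ g₀ : A))
        + ((η₂ g₀ : A) - (η₁ g₀ : A)) := by ring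
    rw [heq, map_add, map_sub, hres_s, hres_t]
    simpa using hηres
  have hu2 : IsUnit ((dA g₀ - aA g₀) + ((η₂ g₀ : A) - (η₁ g₀ : A))) := by
    apply unit_of_res
    have heq : (dA g₀ - aA g₀) + ((η₂ g₀ : A) - (η₁ g₀ : A))
        = (dA g₀ - (η₂ g₀ : A)) - (aA g₀ - (η₁ g₀ : A))
          + 2 * ((η₂ g₀ : A) - (η₁ g₀ : A)) := by ring
    rw [heq, map_add, map_sub, hres_s, hres_t, map_mul, map_ofNat]
    simpa using mul_ne_zero h2 hηres
  -- ideals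
  set J : Ideal A :=
    Ideal.span {x : A | ∃ g : G, x = aA g + dA g - (η₁ g : A) - (η₂ g : A)} with hJ
  set J' : Ideal A := Ideal.span {x : A | ∃ g : G, x = aA g - (η₁ g : A)} with hJ'
  have mem_of_unit : ∀ (I : Ideal A) (c t : A), IsUnit c → t * c ∈ I → t ∈ I := by
    intro I c t hc htc
    obtain ⟨u, rfl⟩ := hc
    have h := I.mul_mem_left (↑u⁻¹) htc
    rwa [show ((↑u⁻¹ : A)) * (t * ↑u) = t by
      rw [mul_comm ((↑u⁻¹ : A)) _, mul_assoc, Units.mul_inv, mul_one]] at h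
  have hmemJ : ∀ g : G, aA g + dA g - (η₁ g : A) - (η₂ g : A) ∈ J := by
    intro g
    exact Ideal.subset_span ⟨g, rfl⟩
  have hmemJ' : ∀ g : G, aA g - (η₁ g : A) ∈ J' := by
    intro g
    exact Ideal.subset_span ⟨g, rfl⟩
  have hgen : ∀ g : G, (aA g - (η₁ g : A)) + (dA g - (η₂ g : A)) ∈ J := by
    intro g
    have h := hmemJ g
    rwa [show (aA g - (η₁ g : A)) + (dA g - (η₂ g : A))
      = aA g + dA g - (η₁ g : A) - (η₂ g : A) by ring]
  have key : ∀ g : G, (dA g₀ - aA g₀) * (dA g - (η₂ g : A))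
      + (aA g₀ - (η₁ g₀ : A)) * (η₁ g : A) + (dA g₀ - (η₂ g₀ : A)) * (η₂ g : A) ∈ J := by
    intro g
    have hE := hmemJ (g₀ * g)
    have hF := hgen g
    have h := J.sub_mem hE (J.mul_mem_left (aA g₀) hF)
    have heq : aA (g₀ * g) + dA (g₀ * g) - ((η₁ (g₀ * g) : A)) - ((η₂ (g₀ * g) : A))
        - aA g₀ * ((aA g - (η₁ g : A)) + (dA g - (η₂ g : A)))
        = (dA g₀ - aA g₀) * (dA g - (η₂ g : A))
          + (aA g₀ - (η₁ g₀ : A)) * (η₁ g : A) + (dA g₀ - (η₂ g₀ : A)) * (η₂ g : A) := by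
      rw [haMul, hdMul, map_mul, map_mul, Units.val_mul, Units.val_mul]
      ring
    rwa [heq] at h
  -- s and t are in J
  have htJ : dA g₀ - (η₂ g₀ : A) ∈ J := by
    apply mem_of_unit J _ _ hu2
    have h1 := key g₀
    have h2 := J.mul_mem_left (η₁ g₀ : A) (hgen g₀)
    have h := J.sub_mem h1 h2
    rwa [show (dA g₀ - aA g₀) * (dA g₀ - (η₂ g₀ : A))
        + (aA g₀ - (η₁ g₀ : A)) * (η₁ g₀ : A) + (dA g₀ - (η₂ g₀ : A)) * (η₂ g₀ : A)
        - (η₁ g₀ : A) * ((aA g₀ - (η₁ g₀ : A)) + (dA g₀ - (η₂ g₀ : A)))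
      = (dA g₀ - (η₂ g₀ : A)) * ((dA g₀ - aA g₀) + ((η₂ g₀ : A) - (η₁ g₀ : A))) by ring] at h
  have hsJ : aA g₀ - (η₁ g₀ : A) ∈ J := by
    have h := J.sub_mem (hgen g₀) htJ
    rwa [show (aA g₀ - (η₁ g₀ : A)) + (dA g₀ - (η₂ g₀ : A)) - (dA g₀ - (η₂ g₀ : A))
      = aA g₀ - (η₁ g₀ : A) by ring] at h
  -- every Y(g) and X(g) is in J
  have hYJ : ∀ g : G, dA g - (η₂ g : A) ∈ J := by
    intro g
    apply mem_of_unit J _ _ hu1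
    have h1 := key g
    have h2 := J.add_mem (Ideal.mul_mem_right (η₁ g : A) J hsJ)
      (Ideal.mul_mem_right (η₂ g : A) J htJ)
    have h := J.sub_mem h1 h2
    rwa [show (dA g₀ - aA g₀) * (dA g - (η₂ g : A))
        + (aA g₀ - (η₁ g₀ : A)) * (η₁ g : A) + (dA g₀ - (η₂ g₀ : A)) * (η₂ g : A)
        - ((aA g₀ - (η₁ g₀ : A)) * (η₁ g : A) + (dA g₀ - (η₂ g₀ : A)) * (η₂ g : A))
      = (dA g - (η₂ g : A)) * (dA g₀ - aA g₀) by ring] at h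
  have hXJ : ∀ g : G, aA g - (η₁ g : A) ∈ J := by
    intro g
    have h := J.sub_mem (hgen g) (hYJ g)
    rwa [show (aA g - (η₁ g : A)) + (dA g - (η₂ g : A)) - (dA g - (η₂ g : A))
      = aA g - (η₁ g : A) by ring] at h
  -- Y(g) ∈ J'
  have hYJ' : ∀ g : G, dA g - (η₂ g : A) ∈ J' := by
    intro g
    have h1 : (η₁ g : A) * ((η₁ g)⁻¹ : Aˣ) = 1 := Units.mul_inv _
    have heq : dA g - (η₂ g : A)
        = ((η₁ g : A) * (η₂ g : A)) * (aA g⁻¹ - (η₁ g⁻¹ : A)) := by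
      rw [hda g, map_inv]
      push_cast
      linear_combination (η₂ g : A) * h1
    rw [heq]
    exact Ideal.mul_mem_left _ _ (hmemJ' g⁻¹)
  -- conclude
  apply le_antisymm
  · rw [hJ]
    apply Ideal.span_le.mpr
    rintro x ⟨g, rfl⟩
    have h := J'.add_mem (hmemJ' g) (hYJ' g)
    rwa [show (aA g - (η₁ g : A)) + (dA g - (η₂ g : A))
      = aA g + dA g - (η₁ g : A) - (η₂ g : A) by ring] at h
  · rw [hJ']
    apply Ideal.span_le.mpr
    rintro x ⟨g, rfl⟩
    exact hXJ g
end
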